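/- Let k ≥ 2 and let H be a k-uniform hypergraph. Then there exists c₀ > 0 such that for all sufficiently large n, for every ordering σ of V(H) and every edge colouring χ : E(K_n^{(k)}) → ℕ, there are at least c₀·n^{v(H)} copies of H in K_n^{(k)} whose colouring under χ is canonical with respect to σ. -/

import Mathlib

/-- The `S`-projection `π_S(e)` of a set `e` with respect to the ordering `σ`: the
elements of `e` whose position (rank) within `e`, in the order given by `σ`, lies in
`S`. Here the rank of `v ∈ e` is `#{u ∈ e : σ u ≤ σ v} ∈ {1, …, |e|}`. -/
def projAt {α : Type*} (σ : α → ℕ) (S : Finset ℕ) (e : Finset α) : Finset α :=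
  e.filter fun v => (e.filter fun u => σ u ≤ σ v).card ∈ S

/-- The colouring `χ` of the edges of the `k`-graph `H` is canonical with respect to
the ordering `σ`: for some `S ⊆ [k]` and some map `φ`, injective on `|S|`-sets, every
edge `e` has colour `φ(π_S(e))`. -/
def IsCanonicalPatternH {α : Type*} (k : ℕ) (H : Finset (Finset α)) (σ : α → ℕ)
    (χ : Finset α → ℕ) : Prop :=
  ∃ S ⊆ Finset.Icc 1 k, ∃ φ : Finset α → ℕ,
    Set.InjOn φ {A : Finset α | A.card = S.card} ∧
    ∀ e ∈ H, χ e = φ (projAt σ S e)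

/-- The maximal `k`-density `m_k(H)` of a `k`-graph `H`, a supremum over subhypergraphs
`F ⊆ H` with vertex set `W` (of size `> k`) of `(e(F) - 1)/(v(F) - k)`. -/
noncomputable def maxKDensity {α : Type*} (k : ℕ) (H : Finset (Finset α)) : ℝ :=
  sSup {x : ℝ | ∃ (W : Finset α) (F : Finset (Finset α)), F ⊆ H ∧ (∀ e ∈ F, e ⊆ W) ∧
    k < W.card ∧ x = ((F.card : ℝ) - 1) / ((W.card : ℝ) - (k : ℝ))}


open Finset

namespace CanonAux

/-- number of elements of `U` below `x` (0-indexed rank). -/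
def rk (U : Finset ℕ) (x : ℕ) : ℕ := (U.filter (· < x)).card

/-- elements of `U` whose rank lies in `P`. -/
def sub (U : Finset ℕ) (P : Finset ℕ) : Finset ℕ := U.filter (fun x => rk U x ∈ P)

/-- positions of `A` inside `U`. -/
def pos (U A : Finset ℕ) : Finset ℕ := A.image (rk U)

lemma rk_lt_card {U : Finset ℕ} {x : ℕ} (hx : x ∈ U) : rk U x < U.card := by
  apply card_lt_card
  refine ⟨filter_subset _ _, fun h => ?_⟩
  have := h hx
  simp at this

lemma rk_le_card (U : Finset ℕ) (x : ℕ) : rk U x ≤ U.card :=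
  card_le_card (filter_subset _ _)

lemma rk_mono {U : Finset ℕ} {x y : ℕ} (hxy : x ≤ y) : rk U x ≤ rk U y := by
  apply card_le_card
  intro z hz
  simp only [mem_filter] at hz ⊢
  exact ⟨hz.1, lt_of_lt_of_le hz.2 hxy⟩

/-- key: for `z ∈ A` and arbitrary `y`, `z < y ↔ rk A z < rk A y`. -/
lemma lt_iff_rk_lt {A : Finset ℕ} {z : ℕ} (hz : z ∈ A) (y : ℕ) :
    z < y ↔ rk A z < rk A y := by
  constructor
  · intro h
    apply card_lt_card
    refine ⟨fun w hw => ?_, fun hsub => ?_⟩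
    · simp only [mem_filter] at hw ⊢
      exact ⟨hw.1, hw.2.trans h⟩
    · have := hsub (mem_filter.mpr ⟨hz, h⟩)
      simp at this
  · intro h
    by_contra hyz
    push_neg at hyz
    exact absurd (rk_mono hyz) (not_le.mpr h)

lemma rk_injOn {A : Finset ℕ} {x y : ℕ} (hx : x ∈ A) (hy : y ∈ A)
    (h : rk A x = rk A y) : x = y := by
  rcases lt_trichotomy x y with h1 | h1 | h1
  · exact absurd ((lt_iff_rk_lt hx y).mp h1) (by omega)
  · exact h1
  · exact absurd ((lt_iff_rk_lt hy x).mp h1) (by omega)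

lemma rk_lt_rk_iff {A : Finset ℕ} {x y : ℕ} (hx : x ∈ A) (hy : y ∈ A) :
    rk A x < rk A y ↔ x < y := (lt_iff_rk_lt hx y).symm

lemma pos_self (U : Finset ℕ) : pos U U = range U.card := by
  apply eq_of_subset_of_card_le
  · intro j hj
    simp only [pos, mem_image] at hj
    obtain ⟨x, hx, rfl⟩ := hj
    simp [rk_lt_card hx]
  · rw [card_range]
    have : (pos U U).card = U.card :=
      Finset.card_image_of_injOn (fun x hx y hy h => rk_injOn hx hy h)
    omega

lemma card_pos_eq {U A : Finset ℕ} (h : A ⊆ U) : (pos U A).card = A.card :=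
  Finset.card_image_of_injOn (fun x hx y hy hxy => rk_injOn (h hx) (h hy) hxy)

lemma pos_subset {U A : Finset ℕ} (h : A ⊆ U) : pos U A ⊆ range U.card := by
  intro j hj
  simp only [pos, mem_image] at hj
  obtain ⟨x, hx, rfl⟩ := hj
  simp [rk_lt_card (h hx)]

lemma pos_union (U A B : Finset ℕ) : pos U (A ∪ B) = pos U A ∪ pos U B :=
  image_union _ _

/-- the `i`-th smallest element of `A` (junk `0` if out of range). -/
noncomputable def kth (A : Finset ℕ) (i : ℕ) : ℕ :=
  if h : i ∈ pos A A then (Finset.mem_image.mp h).choose else 0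

lemma kth_mem_and_rk {A : Finset ℕ} {i : ℕ} (h : i < A.card) :
    kth A i ∈ A ∧ rk A (kth A i) = i := by
  have h' : i ∈ pos A A := by rw [pos_self]; simp [h]
  rw [kth, dif_pos h']
  exact (Finset.mem_image.mp h').choose_spec

lemma kth_mem {A : Finset ℕ} {i : ℕ} (h : i < A.card) : kth A i ∈ A :=
  (kth_mem_and_rk h).1

lemma rk_kth {A : Finset ℕ} {i : ℕ} (h : i < A.card) : rk A (kth A i) = i :=
  (kth_mem_and_rk h).2

lemma kth_rk {A : Finset ℕ} {x : ℕ} (hx : x ∈ A) : kth A (rk A x) = x := by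
  have h := rk_lt_card hx
  exact rk_injOn (kth_mem h) hx (by rw [rk_kth h])

lemma kth_lt_kth {A : Finset ℕ} {i j : ℕ} (hij : i < j) (hj : j < A.card) :
    kth A i < kth A j := by
  have hi : i < A.card := hij.trans hj
  rw [lt_iff_rk_lt (kth_mem hi), rk_kth hi, rk_kth hj]
  exact hij

lemma mem_sub_iff {U P : Finset ℕ} {x : ℕ} : x ∈ sub U P ↔ x ∈ U ∧ rk U x ∈ P :=
  mem_filter

lemma sub_subset (U P : Finset ℕ) : sub U P ⊆ U := filter_subset _ _

lemma sub_pos {U A : Finset ℕ} (h : A ⊆ U) : sub U (pos U A) = A := by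
  ext x
  simp only [mem_sub_iff, pos, mem_image]
  constructor
  · rintro ⟨hxU, a, ha, hra⟩
    rwa [rk_injOn hxU (h ha) hra.symm]
  · intro hx
    exact ⟨h hx, x, hx, rfl⟩

lemma pos_sub {U P : Finset ℕ} (hP : P ⊆ range U.card) : pos U (sub U P) = P := by
  ext j
  simp only [pos, mem_image, mem_sub_iff]
  constructor
  · rintro ⟨x, ⟨hxU, hrk⟩, rfl⟩; exact hrk
  · intro hj
    have hj' : j < U.card := by simpa using hP hj
    exact ⟨kth U j, ⟨kth_mem hj', by rwa [rk_kth hj']⟩, rk_kth hj'⟩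

lemma card_sub {U P : Finset ℕ} (hP : P ⊆ range U.card) : (sub U P).card = P.card := by
  have := card_pos_eq (sub_subset U P)
  rw [pos_sub hP] at this
  omega

lemma sub_eq_image_kth {U P : Finset ℕ} (hP : P ⊆ range U.card) :
    sub U P = P.image (kth U) := by
  ext x
  simp only [mem_sub_iff, mem_image]
  constructor
  · rintro ⟨hxU, hrk⟩
    exact ⟨rk U x, hrk, kth_rk hxU⟩
  · rintro ⟨i, hi, rfl⟩
    have hi' : i < U.card := by simpa using hP hi
    exact ⟨kth_mem hi', by rwa [rk_kth hi']⟩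

section imageLemmas

variable {g : ℕ → ℕ} {U : Finset ℕ}

/-- `g` strictly monotone on `U` (as a finset). -/
def SMonOn (g : ℕ → ℕ) (U : Finset ℕ) : Prop := ∀ x ∈ U, ∀ y ∈ U, x < y → g x < g y

lemma SMonOn.injOn (hg : SMonOn g U) : ∀ x ∈ U, ∀ y ∈ U, g x = g y → x = y := by
  intro x hx y hy h
  rcases lt_trichotomy x y with h1 | h1 | h1
  · exact absurd (hg x hx y hy h1) (by omega)
  · exact h1
  · exact absurd (hg y hy x hx h1) (by omega)

lemma SMonOn.lt_iff (hg : SMonOn g U) {x y : ℕ} (hx : x ∈ U) (hy : y ∈ U) :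
    g x < g y ↔ x < y := by
  constructor
  · intro h
    rcases lt_trichotomy x y with h1 | h1 | h1
    · exact h1
    · subst h1; omega
    · exact absurd (hg y hy x hx h1) (by omega)
  · exact hg x hx y hy

lemma rk_image (hg : SMonOn g U) {x : ℕ} (hx : x ∈ U) :
    rk (U.image g) (g x) = rk U x := by
  unfold rk
  have : (U.image g).filter (· < g x) = (U.filter (· < x)).image g := by
    ext y
    simp only [mem_filter, mem_image]
    constructor
    · rintro ⟨⟨z, hz, rfl⟩, hlt⟩
      exact ⟨z, ⟨hz, by rwa [← hg.lt_iff hz hx]⟩, rfl⟩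
    · rintro ⟨z, ⟨hz, hlt⟩, rfl⟩
      exact ⟨⟨z, hz, rfl⟩, (hg.lt_iff hz hx).mpr hlt⟩
  rw [this, Finset.card_image_of_injOn
    (fun a ha b hb hab => hg.injOn a (filter_subset _ _ ha) b (filter_subset _ _ hb) hab)]

lemma pos_image (hg : SMonOn g U) {A : Finset ℕ} (hA : A ⊆ U) :
    pos (U.image g) (A.image g) = pos U A := by
  unfold pos
  rw [Finset.image_image]
  apply Finset.image_congr
  intro x hx
  exact rk_image hg (hA hx)

lemma sub_image (hg : SMonOn g U) {P : Finset ℕ} :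
    sub (U.image g) P = (sub U P).image g := by
  ext y
  simp only [mem_sub_iff, mem_image]
  constructor
  · rintro ⟨⟨z, hz, rfl⟩, hrk⟩
    rw [rk_image hg hz] at hrk
    exact ⟨z, ⟨hz, hrk⟩, rfl⟩
  · rintro ⟨z, ⟨hz, hrk⟩, rfl⟩
    exact ⟨⟨z, hz, rfl⟩, by rwa [rk_image hg hz]⟩

lemma kth_image (hg : SMonOn g U) {i : ℕ} (h : i < U.card) :
    kth (U.image g) i = g (kth U i) := by
  have hcard : (U.image g).card = U.card :=
    Finset.card_image_of_injOn (fun a ha b hb => hg.injOn a ha b hb)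
  have h1 : g (kth U i) ∈ U.image g := mem_image_of_mem g (kth_mem h)
  have h2 : rk (U.image g) (g (kth U i)) = i := by
    rw [rk_image hg (kth_mem h), rk_kth h]
  nth_rewrite 1 [← h2]
  exact kth_rk h1

end imageLemmas

lemma rk_range {u x : ℕ} (hx : x ≤ u) : rk (range u) x = x := by
  unfold rk
  have : (range u).filter (· < x) = range x := by
    ext y; simp only [mem_filter, mem_range]; omega
  rw [this, card_range]

lemma sub_range {u : ℕ} {P : Finset ℕ} (hP : P ⊆ range u) : sub (range u) P = P := by
  ext x
  simp only [mem_sub_iff, mem_range]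
  constructor
  · rintro ⟨hx, hrk⟩
    rwa [rk_range hx.le] at hrk
  · intro hx
    have : x < u := by simpa using hP hx
    exact ⟨this, by rwa [rk_range this.le]⟩

end CanonAux
section chunk2
open Finset CanonAux
namespace CanonAux

lemma rk_insert_self {A : Finset ℕ} {y : ℕ} : rk (insert y A) y = rk A y := by
  unfold rk
  rw [filter_insert, if_neg (by omega)]

lemma rk_y_le_card {A : Finset ℕ} (y : ℕ) : rk A y ≤ A.card := rk_le_card A y

lemma rk_insert {A : Finset ℕ} {y z : ℕ} (hy : y ∉ A) (hz : z ∈ A) :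
    rk (insert y A) z = if rk A y ≤ rk A z then rk A z + 1 else rk A z := by
  have hzy : z ≠ y := fun h => hy (h ▸ hz)
  have hiff : y < z ↔ rk A y ≤ rk A z := by
    constructor
    · intro h
      exact rk_mono h.le
    · intro h
      by_contra hyz
      push_neg at hyz
      have : z < y := by omega
      have := (lt_iff_rk_lt hz y).mp this
      omega
  by_cases h : y < z
  · rw [if_pos (hiff.mp h)]
    unfold rk
    rw [filter_insert, if_pos h, card_insert_of_notMem (by simp [hy])]
  · rw [if_neg (fun hc => h (hiff.mpr hc))]
    unfold rk
    rw [filter_insert, if_neg h]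

lemma pos_insert {A : Finset ℕ} {y : ℕ} (hy : y ∉ A) :
    pos (insert y A) A = (range (A.card + 1)).erase (rk A y) := by
  have hry := rk_y_le_card (A := A) y
  ext j
  simp only [pos, mem_image, mem_erase, mem_range]
  constructor
  · rintro ⟨z, hz, rfl⟩
    rw [rk_insert hy hz]
    have h1 : rk A z < A.card := rk_lt_card hz
    split <;> omega
  · rintro ⟨hne, hj⟩
    by_cases h : j < rk A y
    · refine ⟨kth A j, kth_mem (by omega), ?_⟩
      rw [rk_insert hy (kth_mem (by omega)), rk_kth (by omega)]
      rw [if_neg (by omega)]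
    · have h1 : rk A y < j := by omega
      refine ⟨kth A (j - 1), kth_mem (by omega), ?_⟩
      rw [rk_insert hy (kth_mem (by omega)), rk_kth (by omega)]
      rw [if_pos (by omega)]
      omega

lemma pos_erase {U : Finset ℕ} {x : ℕ} (hx : x ∈ U) :
    pos U (U.erase x) = (range U.card).erase (rk U x) := by
  ext j
  simp only [pos, mem_image, mem_erase, mem_range]
  constructor
  · rintro ⟨z, hz, rfl⟩
    exact ⟨fun h => hz.1 (rk_injOn hz.2 hx h), rk_lt_card hz.2⟩
  · rintro ⟨hne, hj⟩
    refine ⟨kth U j, ⟨fun h => hne ?_, kth_mem hj⟩, rk_kth hj⟩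
    rw [← h, rk_kth hj]

/-- a legal single-slot move: replace `x ∈ A` by `y ∉ A` lying in the same gap. -/
def IsStep (A : Finset ℕ) (x y : ℕ) : Prop :=
  x ∈ A ∧ y ∉ A ∧ ∀ z ∈ A, z ≠ x → (z < x ↔ z < y)

def mv (A : Finset ℕ) (x y : ℕ) : Finset ℕ := insert y (A.erase x)

namespace IsStep

variable {A : Finset ℕ} {x y : ℕ} (hst : IsStep A x y)
include hst

lemma x_mem : x ∈ A := hst.1
lemma y_not_mem : y ∉ A := hst.2.1
lemma ne : x ≠ y := fun h => hst.2.1 (h ▸ hst.1)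

lemma lt_iff {z : ℕ} (hz : z ∈ A) (hzx : z ≠ x) : (z < x ↔ z < y) := hst.2.2 z hz hzx

lemma gt_iff {z : ℕ} (hz : z ∈ A) (hzx : z ≠ x) : (x < z ↔ y < z) := by
  have h1 := hst.lt_iff hz hzx
  have h2 : z ≠ y := fun h => hst.y_not_mem (h ▸ hz)
  omega

lemma card_mv : (mv A x y).card = A.card := by
  rw [mv, card_insert_of_notMem (fun h => hst.y_not_mem (mem_of_mem_erase h)),
    card_erase_of_mem hst.x_mem]
  have : 0 < A.card := card_pos.mpr ⟨x, hst.x_mem⟩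
  omega

lemma mem_mv_iff {z : ℕ} : z ∈ mv A x y ↔ z = y ∨ (z ∈ A ∧ z ≠ x) := by
  simp only [mv, mem_insert, mem_erase]
  tauto

lemma rk_y : rk A y = if x < y then rk A x + 1 else rk A x := by
  have hxy := hst.ne
  by_cases h : x < y
  · rw [if_pos h]
    have : A.filter (· < y) = insert x (A.filter (· < x)) := by
      ext z
      simp only [mem_filter, mem_insert]
      constructor
      · rintro ⟨hz, hlt⟩
        by_cases hzx : z = x
        · left; exact hzx
        · right; exact ⟨hz, (hst.lt_iff hz hzx).mpr hlt⟩
      · rintro (rfl | ⟨hz, hlt⟩)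
        · exact ⟨hst.x_mem, h⟩
        · refine ⟨hz, ?_⟩
          have hzx : z ≠ x := by omega
          exact (hst.lt_iff hz hzx).mp hlt
    unfold rk
    rw [this, card_insert_of_notMem (by simp)]
  · rw [if_neg h]
    have hyx : y < x := by omega
    have : A.filter (· < y) = A.filter (· < x) := by
      ext z
      simp only [mem_filter]
      constructor
      · rintro ⟨hz, hlt⟩
        have hzx : z ≠ x := by omega
        exact ⟨hz, (hst.lt_iff hz hzx).mpr hlt⟩
      · rintro ⟨hz, hlt⟩
        have hzx : z ≠ x := by omega
        exact ⟨hz, (hst.lt_iff hz hzx).mp hlt⟩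
    unfold rk
    rw [this]

lemma rk_mv_ne {z : ℕ} (hz : z ∈ A) (hzx : z ≠ x) : rk (mv A x y) z = rk A z := by
  have hzy : z ≠ y := fun h => hst.y_not_mem (h ▸ hz)
  unfold mv rk
  rw [filter_insert, filter_erase]
  by_cases h : x < z
  · have hyz : y < z := (hst.gt_iff hz hzx).mp h
    rw [if_pos hyz, card_insert_of_notMem (by simp [hst.y_not_mem]),
      card_erase_of_mem (by simp [mem_filter, hst.x_mem, h])]
    have : x ∈ A.filter (· < z) := by simp [mem_filter, hst.x_mem, h]
    have h0 : 0 < (A.filter (· < z)).card := card_pos.mpr ⟨x, this⟩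
    omega
  · have hyz : ¬ y < z := fun hc => h ((hst.gt_iff hz hzx).mpr hc)
    rw [if_neg hyz, Finset.erase_eq_of_notMem (by simp [mem_filter]; omega)]

lemma rk_mv_y : rk (mv A x y) y = rk A x := by
  unfold mv rk
  rw [filter_insert, if_neg (by omega), filter_erase]
  have : (A.filter (· < y)).erase x = A.filter (· < x) := by
    ext z
    simp only [mem_erase, mem_filter]
    constructor
    · rintro ⟨hzx, hz, hlt⟩
      exact ⟨hz, (hst.lt_iff hz hzx).mpr hlt⟩
    · rintro ⟨hz, hlt⟩
      have hzx : z ≠ x := by omega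
      exact ⟨hzx, hz, (hst.lt_iff hz hzx).mp hlt⟩
  rw [this]

lemma y_mem_mv : y ∈ mv A x y := by simp [mv]

lemma kth_mv_at : kth (mv A x y) (rk A x) = y := by
  rw [← hst.rk_mv_y, kth_rk hst.y_mem_mv]

lemma kth_mv_ne {j : ℕ} (hj : j < A.card) (hne : j ≠ rk A x) :
    kth (mv A x y) j = kth A j := by
  have hz : kth A j ∈ A := kth_mem hj
  have hzx : kth A j ≠ x := by
    intro h
    apply hne
    rw [← rk_kth hj, h]
  have hmem : kth A j ∈ mv A x y := hst.mem_mv_iff.mpr (Or.inr ⟨hz, hzx⟩)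
  have hr : rk (mv A x y) (kth A j) = j := by rw [hst.rk_mv_ne hz hzx, rk_kth hj]
  have h2 := kth_rk hmem
  rw [hr] at h2
  exact h2

/-- positions of `A` in `insert y A`. -/
lemma pos_insert_A : pos (insert y A) A = (range (A.card + 1)).erase (rk A y) :=
  CanonAux.pos_insert hst.y_not_mem

lemma mv_eq_erase : mv A x y = (insert y A).erase x := by
  have hne := hst.ne
  ext z
  simp only [mv, mem_insert, mem_erase]
  constructor
  · rintro (rfl | ⟨h1, h2⟩)
    · exact ⟨fun h => hne h.symm, Or.inl rfl⟩
    · exact ⟨h1, Or.inr h2⟩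
  · rintro ⟨h1, (rfl | h2)⟩
    · exact Or.inl rfl
    · exact Or.inr ⟨h1, h2⟩

lemma rk_insert_x : rk (insert y A) x = if x < y then rk A x else rk A x + 1 := by
  rw [rk_insert hst.y_not_mem hst.x_mem, hst.rk_y]
  by_cases h : x < y
  · simp [h]
  · simp [h]

/-- positions of `mv A x y` in `insert y A`. -/
lemma pos_insert_mv :
    pos (insert y A) (mv A x y)
      = (range (A.card + 1)).erase (if x < y then rk A x else rk A x + 1) := by
  rw [hst.mv_eq_erase, CanonAux.pos_erase (mem_insert_of_mem hst.x_mem),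
    card_insert_of_notMem hst.y_not_mem, hst.rk_insert_x]

lemma rk_y' : rk A y = if x < y then rk A x + 1 else rk A x := hst.rk_y

end IsStep

lemma rk_union_upper {U V : Finset ℕ} (h : ∀ x ∈ U, ∀ y ∈ V, x < y) {z : ℕ}
    (hz : z ∈ U) : rk (U ∪ V) z = rk U z := by
  unfold rk
  congr 1
  ext w
  simp only [mem_filter, mem_union]
  constructor
  · rintro ⟨(hw | hw), hlt⟩
    · exact ⟨hw, hlt⟩
    · exact absurd (h z hz w hw) (by omega)
  · rintro ⟨hw, hlt⟩
    exact ⟨Or.inl hw, hlt⟩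

lemma sub_union_upper {U V P : Finset ℕ} (h : ∀ x ∈ U, ∀ y ∈ V, x < y)
    (hP : P ⊆ range U.card) : sub (U ∪ V) P = sub U P := by
  ext z
  simp only [mem_sub_iff, mem_union]
  constructor
  · rintro ⟨(hz | hz), hrk⟩
    · rw [rk_union_upper h hz] at hrk
      exact ⟨hz, hrk⟩
    · exfalso
      have hU : U ⊆ (U ∪ V).filter (· < z) := by
        intro w hw
        simp only [mem_filter, mem_union]
        exact ⟨Or.inl hw, h w hw z hz⟩
      have : U.card ≤ rk (U ∪ V) z := card_le_card hU
      have := hP hrk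
      simp only [mem_range] at this
      omega
  · rintro ⟨hz, hrk⟩
    exact ⟨Or.inl hz, by rwa [rk_union_upper h hz]⟩

/-- interpolation: extend a monotone map on `I` with large gaps to all of `range u`. -/
lemma interp (u : ℕ) (I : Finset ℕ) (hI : I ⊆ range u) (φ : ℕ → ℕ)
    (hroom : ∀ t ∈ I, t ≤ φ t)
    (hgap : ∀ a ∈ I, ∀ b ∈ I, a < b → φ a + (b - a) ≤ φ b) :
    ∃ η : ℕ → ℕ, SMonOn η (range u) ∧ (∀ t ∈ I, η t = φ t) ∧
      (∀ t < u, η t ≤ I.sup φ + u) := by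
  classical
  refine ⟨fun t => if h : (I.filter (· ≤ t)).Nonempty
    then φ ((I.filter (· ≤ t)).max' h) + (t - (I.filter (· ≤ t)).max' h) else t,
    ?_, ?_, ?_⟩
  · intro s hs t ht hst
    simp only [mem_range] at hs ht
    dsimp only
    by_cases h1 : (I.filter (· ≤ s)).Nonempty
    · have h2 : (I.filter (· ≤ t)).Nonempty := by
        obtain ⟨w, hw⟩ := h1
        simp only [mem_filter] at hw
        exact ⟨w, mem_filter.mpr ⟨hw.1, by omega⟩⟩
      rw [dif_pos h1, dif_pos h2]
      set p := (I.filter (· ≤ s)).max' h1 with hp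
      set q := (I.filter (· ≤ t)).max' h2 with hq
      have hpI : p ∈ I ∧ p ≤ s := by
        have := (I.filter (· ≤ s)).max'_mem h1
        simp only [mem_filter] at this; exact this
      have hqI : q ∈ I ∧ q ≤ t := by
        have := (I.filter (· ≤ t)).max'_mem h2
        simp only [mem_filter] at this; exact this
      have hpq : p ≤ q := by
        apply (I.filter (· ≤ t)).le_max'
        simp only [mem_filter]
        exact ⟨hpI.1, by omega⟩
      rcases eq_or_lt_of_le hpq with heq | hlt
      · rw [heq]
        omega
      · have hqs : s < q := by
          by_contra hc
          push_neg at hc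
          have : q ≤ p := (I.filter (· ≤ s)).le_max' q (by simp only [mem_filter]; exact ⟨hqI.1, hc⟩)
          omega
        have := hgap p hpI.1 q hqI.1 hlt
        omega
    · rw [dif_neg h1]
      by_cases h2 : (I.filter (· ≤ t)).Nonempty
      · rw [dif_pos h2]
        set q := (I.filter (· ≤ t)).max' h2 with hq
        have hqI : q ∈ I ∧ q ≤ t := by
          have := (I.filter (· ≤ t)).max'_mem h2
          simp only [mem_filter] at this; exact this
        have hqs : s < q := by
          by_contra hc
          push_neg at hc
          exact h1 ⟨q, by simp only [mem_filter]; exact ⟨hqI.1, hc⟩⟩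
        have := hroom q hqI.1
        omega
      · rw [dif_neg h2]
        exact hst
  · intro t ht
    have h1 : (I.filter (· ≤ t)).Nonempty := ⟨t, by simp [ht]⟩
    dsimp only
    rw [dif_pos h1]
    have hmax : (I.filter (· ≤ t)).max' h1 = t := by
      apply le_antisymm
      · have := (I.filter (· ≤ t)).max'_mem h1
        simp only [mem_filter] at this
        exact this.2
      · exact (I.filter (· ≤ t)).le_max' t (by simp [ht])
    rw [hmax]
    omega
  · intro t ht
    dsimp only
    by_cases h1 : (I.filter (· ≤ t)).Nonempty
    · rw [dif_pos h1]
      have hm := (I.filter (· ≤ t)).max'_mem h1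
      simp only [mem_filter] at hm
      have : φ ((I.filter (· ≤ t)).max' h1) ≤ I.sup φ := le_sup hm.1
      omega
    · rw [dif_neg h1]
      omega

end CanonAux
end chunk2
section chunk3
open Finset
namespace CanonAux

lemma card_filter_gt {A : Finset ℕ} {a : ℕ} (ha : a ∈ A) :
    (A.filter (a < ·)).card + rk A a + 1 = A.card := by
  classical
  have h1 := Finset.card_filter_add_card_filter_not (s := A) (p := fun x => x < a)
  have h2 : A.filter (fun x => ¬ (fun x => x < a) x) = insert a (A.filter (a < ·)) := by
    ext z
    simp only [mem_filter, mem_insert]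
    constructor
    · rintro ⟨hz, hlt⟩
      rcases Nat.lt_or_ge a z with h | h
      · exact Or.inr ⟨hz, h⟩
      · left; omega
    · rintro (rfl | ⟨hz, hlt⟩)
      · exact ⟨ha, by omega⟩
      · exact ⟨hz, by omega⟩
  rw [h2] at h1
  rw [card_insert_of_notMem (by simp)] at h1
  unfold rk
  omega

/-- Finite hypergraph Ramsey theorem. -/
theorem ramsey : ∀ (k : ℕ) (γ : Type) [DecidableEq γ] [Fintype γ] (m : ℕ),
    ∃ R : ℕ, ∀ (X : Finset ℕ) (χ : Finset ℕ → γ), R ≤ X.card →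
      ∃ M, M ⊆ X ∧ m ≤ M.card ∧
        ∀ A B, A ⊆ M → B ⊆ M → A.card = k → B.card = k → χ A = χ B := by
  intro k
  induction k with
  | zero =>
    intro γ _ _ m
    refine ⟨m, fun X χ hX => ⟨X, Finset.Subset.refl X, hX, fun A B _ _ hA hB => ?_⟩⟩
    rw [Finset.card_eq_zero.mp hA, Finset.card_eq_zero.mp hB]
  | succ k IH =>
    intro γ _ _ m
    -- inner construction
    have inner : ∀ t : ℕ, ∃ R : ℕ, ∀ (X : Finset ℕ) (χ : Finset ℕ → γ), R ≤ X.card →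
        ∃ A Y, A ⊆ X ∧ Y ⊆ X ∧ A.card = t ∧ (∀ a ∈ A, ∀ y ∈ Y, a < y) ∧
          (∀ a ∈ A, ∀ B B', B ⊆ (A ∪ Y).filter (a < ·) → B' ⊆ (A ∪ Y).filter (a < ·) →
            B.card = k → B'.card = k → χ (insert a B) = χ (insert a B')) := by
      intro t
      induction t with
      | zero =>
        exact ⟨0, fun X χ _ => ⟨∅, X, empty_subset X, Finset.Subset.refl X, card_empty,
          by simp, by simp⟩⟩
      | succ t iht =>
        obtain ⟨Rt, hRt⟩ := iht
        obtain ⟨Rk, hRk⟩ := IH γ Rt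
        refine ⟨Rk + 1, fun X χ hX => ?_⟩
        have hXne : X.Nonempty := by
          rw [← card_pos]; omega
        set a₁ := X.min' hXne with ha₁
        have ha₁X : a₁ ∈ X := X.min'_mem hXne
        set X' := X.erase a₁ with hX'
        have hX'card : Rk ≤ X'.card := by
          rw [hX', card_erase_of_mem ha₁X]; omega
        obtain ⟨M₁, hM₁X, hM₁card, hM₁hom⟩ := hRk X' (fun B => χ (insert a₁ B)) hX'card
        obtain ⟨A', Y', hA'M, hY'M, hA'card, hord, hhom⟩ := hRt M₁ χ hM₁card
        have hlt : ∀ z ∈ M₁, a₁ < z := by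
          intro z hz
          have hzX' := hM₁X hz
          rw [hX', mem_erase] at hzX'
          have := X.min'_le z hzX'.2
          omega
        have ha₁A' : a₁ ∉ A' := fun h => absurd (hlt a₁ (hA'M h)) (by omega)
        refine ⟨insert a₁ A', Y', ?_, ?_, ?_, ?_, ?_⟩
        · intro z hz
          rcases mem_insert.mp hz with rfl | hz
          · exact ha₁X
          · exact (X.erase_subset a₁) (hM₁X (hA'M hz))
        · exact fun z hz => (X.erase_subset a₁) (hM₁X (hY'M hz))
        · rw [card_insert_of_notMem ha₁A', hA'card]
        · intro a ha y hy
          rcases mem_insert.mp ha with rfl | ha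
          · exact hlt y (hY'M hy)
          · exact hord a ha y hy
        · intro a ha B B' hB hB' hBc hB'c
          have hsub : (insert a₁ A' ∪ Y').filter (a₁ < ·) ⊆ M₁ := by
            intro z hz
            simp only [mem_filter, mem_union, mem_insert] at hz
            rcases hz.1 with (rfl | hz') | hz'
            · omega
            · exact hA'M hz'
            · exact hY'M hz'
          rcases mem_insert.mp ha with rfl | ha
          · exact hM₁hom B B' (hB.trans hsub) (hB'.trans hsub) hBc hB'c
          · have ha₁a : a₁ < a := hlt a (hA'M ha)
            have hsub2 : (insert a₁ A' ∪ Y').filter (a < ·) ⊆ (A' ∪ Y').filter (a < ·) := by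
              intro z hz
              simp only [mem_filter, mem_union, mem_insert] at hz ⊢
              rcases hz.1 with (rfl | hz') | hz'
              · omega
              · exact ⟨Or.inl hz', hz.2⟩
              · exact ⟨Or.inr hz', hz.2⟩
            exact hhom a ha B B' (hB.trans hsub2) (hB'.trans hsub2) hBc hB'c
    -- final assembly
    obtain ⟨R, hR⟩ := inner (k + Fintype.card γ * m + 1)
    refine ⟨R, fun X χ hX => ?_⟩
    obtain ⟨A, Y, hAX, _, hAcard, _, hhom⟩ := hR X χ hX
    set t' := k + Fintype.card γ * m + 1 with ht'
    have hPA : ∀ a ∈ A, ∀ B B', B ⊆ A.filter (a < ·) → B' ⊆ A.filter (a < ·) →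
        B.card = k → B'.card = k → χ (insert a B) = χ (insert a B') := by
      intro a ha B B' hB hB' hBc hB'c
      have hsub : A.filter (a < ·) ⊆ (A ∪ Y).filter (a < ·) :=
        filter_subset_filter _ (subset_union_left)
      exact hhom a ha B B' (hB.trans hsub) (hB'.trans hsub) hBc hB'c
    set A' := sub A (range (Fintype.card γ * m + 1)) with hA'
    have hA'sub : A' ⊆ A := sub_subset _ _
    have hA'card : A'.card = Fintype.card γ * m + 1 := by
      rw [hA', card_sub (by rw [hAcard]; intro z hz; simp only [mem_range] at hz ⊢; omega),
        card_range]
    have hup : ∀ a ∈ A', k ≤ (A.filter (a < ·)).card := by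
      intro a ha
      rw [hA', mem_sub_iff] at ha
      have h1 := card_filter_gt ha.1
      have h2 := ha.2
      simp only [mem_range] at h2
      omega
    classical
    set v : ℕ → γ := fun a => χ (insert a (sub (A.filter (a < ·)) (range k))) with hv
    have : Nonempty γ := ⟨χ ∅⟩
    obtain ⟨c, _, hc⟩ := Finset.exists_le_card_fiber_of_mul_le_card_of_maps_to
      (s := A') (t := (univ : Finset γ)) (f := v) (n := m) (fun a _ => mem_univ _)
      univ_nonempty (by rw [hA'card, card_univ]; exact Nat.le_succ _)
    refine ⟨A'.filter (fun a => v a = c), (filter_subset _ _).trans (hA'sub.trans hAX), hc, ?_⟩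
    have key : ∀ C, C ⊆ A'.filter (fun a => v a = c) → C.card = k + 1 → χ C = c := by
      intro C hC hCcard
      have hCne : C.Nonempty := by rw [← card_pos]; omega
      set a := C.min' hCne with haa
      have haC : a ∈ C := C.min'_mem hCne
      have haM := hC haC
      simp only [mem_filter] at haM
      have haA : a ∈ A := hA'sub haM.1
      have hBsub : C.erase a ⊆ A.filter (a < ·) := by
        intro z hz
        rw [mem_erase] at hz
        have hzC := hz.2
        have := C.min'_le z hzC
        simp only [mem_filter]
        have hzM := hC hzC
        simp only [mem_filter] at hzM
        refine ⟨hA'sub hzM.1, ?_⟩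
        rcases Nat.lt_or_ge a z with h | h
        · exact h
        · exfalso; apply hz.1; omega
      have htopk : sub (A.filter (a < ·)) (range k) ⊆ A.filter (a < ·) := sub_subset _ _
      have htopkcard : (sub (A.filter (a < ·)) (range k)).card = k := by
        rw [card_sub, card_range]
        intro z hz
        simp only [mem_range] at hz ⊢
        have := hup a haM.1
        omega
      have hBcard : (C.erase a).card = k := by
        rw [card_erase_of_mem haC, hCcard]
        omega
      have := hPA a haA (C.erase a) (sub (A.filter (a < ·)) (range k)) hBsub
        htopk hBcard htopkcard
      rw [Finset.insert_erase haC] at this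
      rw [this]
      exact haM.2
    intro A₁ B₁ hA₁ hB₁ hA₁c hB₁c
    rw [key A₁ hA₁ hA₁c, key B₁ hB₁ hB₁c]

end CanonAux
end chunk3
section chunk4a
open Finset
namespace CanonAux

lemma pos_range {u : ℕ} {A : Finset ℕ} (hA : A ⊆ range u) : pos (range u) A = A := by
  ext j
  simp only [pos, mem_image]
  constructor
  · rintro ⟨x, hx, rfl⟩
    have : x < u := by simpa using hA hx
    rwa [rk_range this.le]
  · intro hj
    have : j < u := by simpa using hA hj
    exact ⟨j, hj, rk_range this.le⟩

lemma mem_pos_iff {U A : Finset ℕ} {x : ℕ} (hA : A ⊆ U) (hx : x ∈ U) :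
    rk U x ∈ pos U A ↔ x ∈ A := by
  simp only [pos, mem_image]
  constructor
  · rintro ⟨a, ha, hra⟩
    rwa [rk_injOn hx (hA ha) hra.symm]
  · intro h; exact ⟨x, h, rfl⟩

lemma pos_erase_of_subset {U A : Finset ℕ} {x : ℕ} (hA : A ⊆ U) (hx : x ∈ A) :
    pos U (A.erase x) = (pos U A).erase (rk U x) := by
  ext j
  simp only [pos, mem_image, mem_erase]
  constructor
  · rintro ⟨z, hz, rfl⟩
    exact ⟨fun h => hz.1 (rk_injOn (hA hz.2) (hA hx) h), z, hz.2, rfl⟩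
  · rintro ⟨hne, z, hz, rfl⟩
    exact ⟨z, ⟨fun h => hne (by rw [h]), hz⟩, rfl⟩

lemma ext_kth {k : ℕ} {A B : Finset ℕ} (hAc : A.card = k) (hBc : B.card = k)
    (h : ∀ j < k, kth A j = kth B j) : A = B := by
  apply eq_of_subset_of_card_le
  · intro x hx
    have h1 : rk A x < k := by rw [← hAc]; exact rk_lt_card hx
    have h2 := h _ h1
    rw [kth_rk hx] at h2
    rw [h2]
    exact kth_mem (by omega)
  · omega

section withChi

variable {k m₀ : ℕ} {χ' : Finset ℕ → ℕ}

/-- pattern-homogeneity of `χ'` on `range (m₀ + 2k)`. -/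
def Homog (k m₀ : ℕ) (χ' : Finset ℕ → ℕ) : Prop :=
  ∀ T T' : Finset ℕ, T ⊆ range (m₀ + 2*k) → T' ⊆ range (m₀ + 2*k) →
    T.card = 2*k → T'.card = 2*k →
    ∀ P Q : Finset ℕ, P ⊆ range (2*k) → Q ⊆ range (2*k) → P.card = k → Q.card = k →
      ((χ' (sub T P) = χ' (sub T Q)) ↔ (χ' (sub T' P) = χ' (sub T' Q)))

/-- type invariance: whether two `k`-sets get the same colour depends only on the
relative positions of the two sets inside their union. -/
lemma L1 (hom : Homog k m₀ χ') {A B A' B' : Finset ℕ}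
    (hA : A ⊆ range m₀) (hB : B ⊆ range m₀) (hA' : A' ⊆ range m₀) (hB' : B' ⊆ range m₀)
    (hAc : A.card = k) (hBc : B.card = k) (hA'c : A'.card = k) (hB'c : B'.card = k)
    (hP : pos (A ∪ B) A = pos (A' ∪ B') A') (hQ : pos (A ∪ B) B = pos (A' ∪ B') B') :
    (χ' A = χ' B ↔ χ' A' = χ' B') := by
  classical
  -- a common padding construction
  have main : ∀ C D : Finset ℕ, C ⊆ range m₀ → D ⊆ range m₀ → C.card = k → D.card = k →
      ∀ P Q : Finset ℕ, pos (C ∪ D) C = P → pos (C ∪ D) D = Q →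
      ∃ T, T ⊆ range (m₀ + 2*k) ∧ T.card = 2*k ∧ P ⊆ range (2*k) ∧ Q ⊆ range (2*k) ∧
        P.card = k ∧ Q.card = k ∧ sub T P = C ∧ sub T Q = D := by
    intro C D hC hD hCc hDc P Q hPP hQQ
    set U := C ∪ D with hU
    have hCU : C ⊆ U := subset_union_left
    have hDU : D ⊆ U := subset_union_right
    have hUcard_le : U.card ≤ 2*k := by
      have h : U.card ≤ C.card + D.card := card_union_le C D
      omega
    have hUcard_ge : k ≤ U.card := by
      have := card_le_card hCU
      omega
    set pad := (range (2*k - U.card)).image (· + m₀) with hpad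
    have hpadcard : pad.card = 2*k - U.card := by
      rw [hpad, Finset.card_image_of_injective _ (add_left_injective m₀), card_range]
    have hupper : ∀ x ∈ U, ∀ y ∈ pad, x < y := by
      intro x hx y hy
      have hxm : x < m₀ := by
        have := (union_subset hC hD) hx
        simpa using this
      rw [hpad] at hy
      simp only [mem_image, mem_range] at hy
      obtain ⟨t, _, rfl⟩ := hy
      omega
    have hdisj : Disjoint U pad := by
      rw [Finset.disjoint_left]
      intro x hx hxp
      exact absurd (hupper x hx x hxp) (by omega)
    set T := U ∪ pad with hT
    have hTcard : T.card = 2*k := by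
      rw [hT, card_union_of_disjoint hdisj, hpadcard]
      omega
    have hTsub : T ⊆ range (m₀ + 2*k) := by
      intro x hx
      rw [hT, mem_union] at hx
      simp only [mem_range]
      rcases hx with hx | hx
      · have := (union_subset hC hD) hx
        simp only [mem_range] at this
        omega
      · rw [hpad] at hx
        simp only [mem_image, mem_range] at hx
        obtain ⟨t, ht, rfl⟩ := hx
        omega
    have hPsub : P ⊆ range U.card := by rw [← hPP]; exact pos_subset hCU
    have hQsub : Q ⊆ range U.card := by rw [← hQQ]; exact pos_subset hDU
    have hPr : P ⊆ range (2*k) := hPsub.trans (by intro z hz; simp only [mem_range] at *; omega)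
    have hQr : Q ⊆ range (2*k) := hQsub.trans (by intro z hz; simp only [mem_range] at *; omega)
    have hPc : P.card = k := by rw [← hPP, card_pos_eq hCU, hCc]
    have hQc : Q.card = k := by rw [← hQQ, card_pos_eq hDU, hDc]
    refine ⟨T, hTsub, hTcard, hPr, hQr, hPc, hQc, ?_, ?_⟩
    · rw [hT, sub_union_upper hupper hPsub, ← hPP, sub_pos hCU]
    · rw [hT, sub_union_upper hupper hQsub, ← hQQ, sub_pos hDU]
  obtain ⟨T, hT1, hT2, hP1, hQ1, hP2, hQ2, hsP, hsQ⟩ :=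
    main A B hA hB hAc hBc _ _ rfl rfl
  obtain ⟨T', hT'1, hT'2, _, _, _, _, hsP', hsQ'⟩ :=
    main A' B' hA' hB' hA'c hB'c (pos (A ∪ B) A) (pos (A ∪ B) B) hP.symm hQ.symm
  have := hom T T' hT1 hT'1 hT2 hT'2 _ _ hP1 hQ1 hP2 hQ2
  rw [hsP, hsQ, hsP', hsQ'] at this
  exact this

/-- the canonical set of "essential" positions. -/
def S0 (k : ℕ) (χ' : Finset ℕ → ℕ) : Finset ℕ :=
  (range k).filter (fun i => ¬ (χ' ((range (k+1)).erase (i+1)) = χ' ((range (k+1)).erase i)))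

lemma S0_subset : S0 k χ' ⊆ range k := filter_subset _ _

lemma mem_S0_iff {i : ℕ} (hik : i < k) :
    i ∉ S0 k χ' ↔ χ' ((range (k+1)).erase (i+1)) = χ' ((range (k+1)).erase i) := by
  simp [S0, hik]

lemma mv_union {A : Finset ℕ} {x y : ℕ} (hx : x ∈ A) : A ∪ mv A x y = insert y A := by
  ext z
  simp only [mem_union, mv, mem_insert, mem_erase]
  constructor
  · rintro (hz | hz | hz)
    · exact Or.inr hz
    · exact Or.inl hz
    · exact Or.inr hz.2
  · rintro (rfl | hz)
    · exact Or.inr (Or.inl rfl)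
    · exact Or.inl hz

/-- The basic step lemma: a single-slot move changes the colour iff the slot is
essential. -/
lemma step_iff (hm : k + 1 ≤ m₀) (hom : Homog k m₀ χ') {A : Finset ℕ} {x y : ℕ}
    (hA : A ⊆ range m₀) (hAc : A.card = k) (hst : IsStep A x y) (hy : y < m₀) :
    (χ' A = χ' (mv A x y) ↔ rk A x ∉ S0 k χ') := by
  have hik : rk A x < k := by rw [← hAc]; exact rk_lt_card hst.x_mem
  set i := rk A x with hi
  set C := mv A x y with hC
  have hCsub : C ⊆ range m₀ := by
    intro z hz
    rcases hst.mem_mv_iff.mp hz with rfl | hz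
    · simp [hy]
    · exact hA hz.1
  have hCc : C.card = k := by rw [hC, hst.card_mv, hAc]
  have hAC : A ∪ C = insert y A := mv_union hst.x_mem
  have hposA : pos (A ∪ C) A = (range (k+1)).erase (rk A y) := by
    rw [hAC, pos_insert hst.y_not_mem, hAc]
  have hposC : pos (A ∪ C) C = (range (k+1)).erase (if x < y then i else i + 1) := by
    rw [hAC, hC, hst.pos_insert_mv, hAc]
  -- canonical model pair
  have hcanon : ∀ a b : ℕ, a < k + 1 → b < k + 1 → a ≠ b →
      pos ((range (k+1)).erase a ∪ (range (k+1)).erase b) ((range (k+1)).erase a)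
        = (range (k+1)).erase a ∧
      pos ((range (k+1)).erase a ∪ (range (k+1)).erase b) ((range (k+1)).erase b)
        = (range (k+1)).erase b := by
    intro a b ha hb hab
    have hun : (range (k+1)).erase a ∪ (range (k+1)).erase b = range (k+1) := by
      ext z
      simp only [mem_union, mem_erase, mem_range]
      constructor
      · rintro (⟨_, h⟩ | ⟨_, h⟩) <;> exact h
      · intro hz
        rcases Decidable.eq_or_ne z a with rfl | hza
        · exact Or.inr ⟨by omega, hz⟩
        · exact Or.inl ⟨hza, hz⟩
    rw [hun]
    exact ⟨pos_range (erase_subset _ _), pos_range (erase_subset _ _)⟩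
  have hesub : ∀ a : ℕ, (range (k+1)).erase a ⊆ range m₀ := by
    intro a z hz
    have := mem_of_mem_erase hz
    simp only [mem_range] at this ⊢
    omega
  have hecard : ∀ a : ℕ, a < k + 1 → ((range (k+1)).erase a).card = k := by
    intro a ha
    rw [card_erase_of_mem (by simp [ha]), card_range]
    omega
  by_cases hxy : x < y
  · have hry : rk A y = i + 1 := by rw [hst.rk_y', if_pos hxy]
    have h1 := hcanon (i+1) i (by omega) (by omega) (by omega)
    have := L1 hom hA hCsub (hesub (i+1)) (hesub i) hAc hCc
      (hecard (i+1) (by omega)) (hecard i (by omega))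
      (by rw [hposA, hry, h1.1]) (by rw [hposC, if_pos hxy, h1.2])
    rw [this, mem_S0_iff hik]
  · have hry : rk A y = i := by rw [hst.rk_y', if_neg hxy]
    have h1 := hcanon i (i+1) (by omega) (by omega) (by omega)
    have := L1 hom hA hCsub (hesub i) (hesub (i+1)) hAc hCc
      (hecard i (by omega)) (hecard (i+1) (by omega))
      (by rw [hposA, hry, h1.1]) (by rw [hposC, if_neg hxy, h1.2])
    rw [this, mem_S0_iff hik, eq_comm]

end withChi

end CanonAux
end chunk4a
section chunk4b
open Finset
namespace CanonAux

lemma gmono {c : ℕ} (hc : 0 < c) {s t : ℕ} (h : s < t) : c*(s+1) < c*(t+1) := by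
  have h1 : c*(s+2) ≤ c*(t+1) := Nat.mul_le_mul_left c (by omega)
  have h2 : c*(s+2) = c*(s+1) + c := by ring
  omega

lemma gle {c : ℕ} {s t : ℕ} (h : s ≤ t) : c*(s+1) ≤ c*(t+1) :=
  Nat.mul_le_mul_left c (by omega)

lemma ginj {c : ℕ} (hc : 0 < c) {s t : ℕ} (h : c*(s+1) = c*(t+1)) : s = t := by
  rcases lt_trichotomy s t with h1 | h1 | h1
  · exact absurd (gmono hc h1) (by omega)
  · exact h1
  · exact absurd (gmono hc h1) (by omega)

section withChi

variable {k m₀ : ℕ} {χ' : Finset ℕ → ℕ}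

/-- choose a differing slot where a legal move is possible. -/
lemma exists_step {A B : Finset ℕ} (hAc : A.card = k) (hBc : B.card = k)
    (hDne : ((range k).filter (fun j => kth A j ≠ kth B j)).Nonempty) :
    ∃ j, j ∈ (range k).filter (fun j => kth A j ≠ kth B j) ∧
      IsStep A (kth A j) (kth B j) := by
  classical
  set D := (range k).filter (fun j => kth A j ≠ kth B j) with hD
  have hDmem : ∀ l, l ∈ D ↔ (l < k ∧ kth A l ≠ kth B l) := by
    intro l; rw [hD]; simp
  by_cases hcase : (D.filter (fun j => kth B j < kth A j)).Nonempty
  · obtain ⟨j, hjF, hjmin⟩ := Finset.exists_min_image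
      (D.filter (fun j => kth B j < kth A j)) id hcase
    rw [mem_filter] at hjF
    obtain ⟨hjD, hjlt⟩ := hjF
    have hjk : j < k := ((hDmem j).mp hjD).1
    have key : ∀ z ∈ A, z ≠ kth A j → (z < kth A j ↔ z < kth B j) := by
      intro z hz hzx
      have hlk : rk A z < k := by rw [← hAc]; exact rk_lt_card hz
      have hzl : z = kth A (rk A z) := (kth_rk hz).symm
      have hlj : rk A z ≠ j := by
        intro h; apply hzx; rw [hzl, h]
      rcases lt_or_gt_of_ne hlj with hlj' | hlj'
      · have h1 : z < kth A j := by rw [hzl]; exact kth_lt_kth hlj' (by omega)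
        have h2 : z < kth B j := by
          by_cases hlD : rk A z ∈ D
          · have hnin : rk A z ∉ D.filter (fun j => kth B j < kth A j) := by
              intro hc
              have := hjmin _ hc
              simp only [id] at this
              omega
            have hne' : kth A (rk A z) ≠ kth B (rk A z) := ((hDmem _).mp hlD).2
            have h3 : kth A (rk A z) < kth B (rk A z) := by
              rw [mem_filter] at hnin
              push_neg at hnin
              have := hnin hlD
              omega
            have h4 : kth B (rk A z) < kth B j := kth_lt_kth hlj' (by omega)
            omega
          · have h3 : kth A (rk A z) = kth B (rk A z) := by
              by_contra hc
              exact hlD ((hDmem _).mpr ⟨hlk, hc⟩)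
            have h4 : kth B (rk A z) < kth B j := kth_lt_kth hlj' (by omega)
            omega
        exact iff_of_true h1 h2
      · have h1 : kth A j < z := by rw [hzl]; exact kth_lt_kth hlj' (by omega)
        exact iff_of_false (by omega) (by omega)
    have hynot : kth B j ∉ A := by
      intro hyA
      have hne' : kth B j ≠ kth A j := by
        have := ((hDmem j).mp hjD).2
        omega
      have := key _ hyA hne'
      omega
    exact ⟨j, hjD, kth_mem (by omega), hynot, key⟩
  · -- all differing slots have kth A < kth B; take the largest
    obtain ⟨j, hjD, hjmax⟩ := Finset.exists_max_image D id hDne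
    have hjk : j < k := ((hDmem j).mp hjD).1
    have hforall : ∀ l ∈ D, kth A l < kth B l := by
      intro l hlD
      have h1 : l ∉ D.filter (fun j => kth B j < kth A j) := by
        intro hc
        exact hcase ⟨l, hc⟩
      rw [mem_filter] at h1
      push_neg at h1
      have h2 := h1 hlD
      have h3 := ((hDmem l).mp hlD).2
      omega
    have hjlt : kth A j < kth B j := hforall j hjD
    have key : ∀ z ∈ A, z ≠ kth A j → (z < kth A j ↔ z < kth B j) := by
      intro z hz hzx
      have hlk : rk A z < k := by rw [← hAc]; exact rk_lt_card hz
      have hzl : z = kth A (rk A z) := (kth_rk hz).symm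
      have hlj : rk A z ≠ j := by
        intro h; apply hzx; rw [hzl, h]
      rcases lt_or_gt_of_ne hlj with hlj' | hlj'
      · have h1 : z < kth A j := by rw [hzl]; exact kth_lt_kth hlj' (by omega)
        exact iff_of_true h1 (by omega)
      · have h1 : kth A j < z := by rw [hzl]; exact kth_lt_kth hlj' (by omega)
        have h2 : rk A z ∉ D := by
          intro hc
          have := hjmax _ hc
          simp only [id] at this
          omega
        have h3 : kth A (rk A z) = kth B (rk A z) := by
          by_contra hc
          exact h2 ((hDmem _).mpr ⟨hlk, hc⟩)
        have h4 : kth B j < kth B (rk A z) := kth_lt_kth hlj' (by omega)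
        exact iff_of_false (by omega) (by omega)
    have hynot : kth B j ∉ A := by
      intro hyA
      have hlk : rk A (kth B j) < k := by rw [← hAc]; exact rk_lt_card hyA
      have hzl : kth B j = kth A (rk A (kth B j)) := (kth_rk hyA).symm
      rcases lt_trichotomy (rk A (kth B j)) j with h | h | h
      · have : kth A (rk A (kth B j)) < kth A j := kth_lt_kth h (by omega)
        omega
      · rw [h] at hzl
        omega
      · have h2 : rk A (kth B j) ∉ D := by
          intro hc
          have := hjmax _ hc
          simp only [id] at this
          omega
        have h3 : kth A (rk A (kth B j)) = kth B (rk A (kth B j)) := by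
          by_contra hc
          exact h2 ((hDmem _).mpr ⟨hlk, hc⟩)
        have h4 : kth B j < kth B (rk A (kth B j)) := kth_lt_kth h (by omega)
        omega
    exact ⟨j, hjD, kth_mem (by omega), hynot, key⟩

/-- colour is preserved if the two sets agree on all essential slots. -/
lemma sweep (hm : k + 1 ≤ m₀) (hom : Homog k m₀ χ') :
    ∀ d : ℕ, ∀ A B : Finset ℕ, A ⊆ range m₀ → B ⊆ range m₀ → A.card = k → B.card = k →
      ((range k).filter (fun j => kth A j ≠ kth B j)).card = d →
      (∀ i ∈ S0 k χ', kth A i = kth B i) → χ' A = χ' B := by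
  intro d
  induction d using Nat.strong_induction_on with
  | _ d IH =>
  intro A B hA hB hAc hBc hd hagree
  rcases Nat.eq_zero_or_pos d with rfl | hdpos
  · have hall : ∀ j < k, kth A j = kth B j := by
      intro j hj
      by_contra hne
      have hmem : j ∈ (range k).filter (fun j => kth A j ≠ kth B j) := by
        simp [hj, hne]
      rw [Finset.card_eq_zero.mp hd] at hmem
      simp at hmem
    rw [ext_kth hAc hBc hall]
  · have hDne : ((range k).filter (fun j => kth A j ≠ kth B j)).Nonempty := by
      rw [← card_pos, hd]; omega
    obtain ⟨j, hjD, hstep⟩ := exists_step hAc hBc hDne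
    rw [mem_filter, mem_range] at hjD
    obtain ⟨hjk, hjne⟩ := hjD
    set x := kth A j with hx
    set y := kth B j with hy
    have hjS : j ∉ S0 k χ' := fun hc => hjne (hagree j hc)
    have hrkx : rk A x = j := rk_kth (by omega)
    set C := mv A x y with hC
    have hCsub : C ⊆ range m₀ := by
      intro z hz
      rcases hstep.mem_mv_iff.mp hz with rfl | hz
      · exact hB (kth_mem (by omega))
      · exact hA hz.1
    have hCc : C.card = k := by rw [hC, hstep.card_mv, hAc]
    have hEq1 : χ' A = χ' C := by
      rw [step_iff hm hom hA hAc hstep (by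
        have := hB (kth_mem (show j < B.card by omega))
        simpa using this), hrkx]
      exact hjS
    have hkC : ∀ l < k, l ≠ j → kth C l = kth A l := by
      intro l hl hlj
      exact hstep.kth_mv_ne (by omega) (by rw [hrkx]; exact hlj)
    have hkCj : kth C j = y := by
      have := hstep.kth_mv_at
      rwa [hrkx] at this
    have hDC : (range k).filter (fun l => kth C l ≠ kth B l)
        = ((range k).filter (fun l => kth A l ≠ kth B l)).erase j := by
      ext l
      simp only [mem_filter, mem_erase, mem_range]
      constructor
      · rintro ⟨hlk, hlne⟩
        rcases Decidable.eq_or_ne l j with rfl | hlj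
        · rw [hkCj] at hlne; omega
        · rw [hkC l hlk hlj] at hlne
          exact ⟨hlj, hlk, hlne⟩
      · rintro ⟨hlj, hlk, hlne⟩
        rw [← hkC l hlk hlj] at hlne
        exact ⟨hlk, hlne⟩
    have hdC : ((range k).filter (fun l => kth C l ≠ kth B l)).card = d - 1 := by
      rw [hDC, card_erase_of_mem (by simp [hjk, hjne]; exact hjne), hd]
    have hagreeC : ∀ i ∈ S0 k χ', kth C i = kth B i := by
      intro i hi
      have hik : i < k := by simpa using S0_subset hi
      have hij : i ≠ j := fun h => hjS (h ▸ hi)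
      rw [hkC i hik hij]
      exact hagree i hi
    have hEq2 : χ' C = χ' B := IH (d-1) (by omega) C B hCsub hB hCc hBc hdC hagreeC
    rw [hEq1, hEq2]

end withChi

end CanonAux
end chunk4b
section chunk4c
open Finset
namespace CanonAux

section withChi

variable {k m₀ : ℕ} {χ' : Finset ℕ → ℕ}

lemma km_le {k m₀ : ℕ} (hk : 1 ≤ k) (hm : (2*k+2)*(2*k+2) ≤ m₀) : k + 1 ≤ m₀ := by
  have h1 : (2*k+2)*1 ≤ (2*k+2)*(2*k+2) := Nat.mul_le_mul_left _ (by omega)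
  omega

/-- if the `i`-th element of `X` is not in `Z` and `i` is essential,
then `χ' X ≠ χ' Z`. -/
lemma free_contra (hk : 1 ≤ k) (hm : (2*k+2)*(2*k+2) ≤ m₀) (hom : Homog k m₀ χ')
    {X Z : Finset ℕ} {i : ℕ}
    (hX : X ⊆ range m₀) (hZ : Z ⊆ range m₀) (hXc : X.card = k) (hZc : Z.card = k)
    (hEq : χ' X = χ' Z) (hiS : i ∈ S0 k χ') (hnin : kth X i ∉ Z) : False := by
  classical
  have hik : i < k := by simpa using S0_subset hiS
  set c := 2*k+2 with hc
  have hcpos : 0 < c := by omega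
  set U := X ∪ Z with hU
  have hXU : X ⊆ U := subset_union_left
  have hZU : Z ⊆ U := subset_union_right
  have huk : k ≤ U.card := hXc ▸ card_le_card hXU
  have hu2k : U.card ≤ 2*k := by
    have h : U.card ≤ X.card + Z.card := card_union_le X Z
    omega
  set u := U.card with hu
  set I := pos U X with hI
  set J := pos U Z with hJ
  have hIr : I ⊆ range u := pos_subset hXU
  have hJr : J ⊆ range u := pos_subset hZU
  have hIc : I.card = k := by rw [hI, card_pos_eq hXU, hXc]
  have hJc : J.card = k := by rw [hJ, card_pos_eq hZU, hZc]
  have hIJ : I ∪ J = range u := by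
    rw [hI, hJ, ← pos_union, ← hU, hu, pos_self]
  set g : ℕ → ℕ := fun t => c*(t+1) with hg
  have hgS : ∀ (V : Finset ℕ), SMonOn g V := fun V a _ b _ h => gmono hcpos h
  have hginj : ∀ s t, g s = g t → s = t := fun s t h => ginj hcpos h
  set X₀ := I.image g with hX₀
  set Z₀ := J.image g with hZ₀
  set U₀ := (range u).image g with hU₀
  have hU₀eq : U₀ = X₀ ∪ Z₀ := by rw [hU₀, hX₀, hZ₀, ← image_union, hIJ]
  have hX₀U₀ : X₀ ⊆ U₀ := by rw [hU₀eq]; exact subset_union_left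
  have hZ₀U₀ : Z₀ ⊆ U₀ := by rw [hU₀eq]; exact subset_union_right
  have hX₀c : X₀.card = k := by
    rw [hX₀, Finset.card_image_of_injOn (fun a _ b _ h => hginj a b h), hIc]
  have hZ₀c : Z₀.card = k := by
    rw [hZ₀, Finset.card_image_of_injOn (fun a _ b _ h => hginj a b h), hJc]
  have hgbound : ∀ t, t < u → g t + 2 ≤ m₀ := by
    intro t ht
    have h1 : c*(t+1) ≤ c*(2*k) := Nat.mul_le_mul_left c (by omega)
    have h2 : c*c = c*(2*k) + 2*c := by rw [hc]; ring
    have h3 : 2 ≤ c := by omega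
    simp only [hg]
    omega
  have hX₀r : X₀ ⊆ range m₀ := by
    intro z hz
    rw [hX₀, mem_image] at hz
    obtain ⟨t, ht, rfl⟩ := hz
    have : t < u := by simpa using hIr ht
    have := hgbound t this
    simp only [mem_range]
    omega
  have hZ₀r : Z₀ ⊆ range m₀ := by
    intro z hz
    rw [hZ₀, mem_image] at hz
    obtain ⟨t, ht, rfl⟩ := hz
    have : t < u := by simpa using hJr ht
    have := hgbound t this
    simp only [mem_range]
    omega
  have hposX₀ : pos U₀ X₀ = I := by
    rw [hU₀, hX₀, pos_image (hgS (range u)) hIr, pos_range hIr]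
  have hposZ₀ : pos U₀ Z₀ = J := by
    rw [hU₀, hZ₀, pos_image (hgS (range u)) hJr, pos_range hJr]
  have hEq₀ : χ' X₀ = χ' Z₀ := by
    have := L1 hom hX hZ hX₀r hZ₀r hXc hZc hX₀c hZ₀c
      (by rw [← hU₀eq, hposX₀, hI]) (by rw [← hU₀eq, hposZ₀, hJ])
    exact this.mp hEq
  -- the position of the i-th element of X
  set p := kth I i with hp
  have hpI : p ∈ I := kth_mem (by omega)
  have hrkS : SMonOn (rk U) X := fun a ha b hb h => (lt_iff_rk_lt (hXU ha) b).mp h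
  have hrkSZ : SMonOn (rk U) Z := fun a ha b hb h => (lt_iff_rk_lt (hZU ha) b).mp h
  have hpX : p = rk U (kth X i) := by
    rw [hp, hI]
    exact kth_image hrkS (by omega)
  have hkXiU : kth X i ∈ U := hXU (kth_mem (by omega))
  have hpJ : p ∉ J := by
    rw [hpX, hJ]
    rw [mem_pos_iff hZU hkXiU]
    exact hnin
  set x₀ := g p with hx₀
  set y₀ := g p + 1 with hy₀
  have hy₀U₀ : y₀ ∉ U₀ := by
    rw [hU₀, mem_image]
    rintro ⟨t, ht, heq⟩
    have h1 : c*(t+1) = c*(p+1) + 1 := by simpa [hg, hy₀, hx₀] using heq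
    have hc2 : 2 ≤ c := by omega
    rcases le_or_gt t p with h | h
    · have h2 : c*(t+1) ≤ c*(p+1) := gle h
      omega
    · have h2 : c*(p+2) ≤ c*(t+1) := gle h
      have h3 : c*(p+2) = c*(p+1) + c := by ring
      omega
  have hx₀X₀ : x₀ ∈ X₀ := by rw [hX₀]; exact mem_image_of_mem g hpI
  have hx₀Z₀ : x₀ ∉ Z₀ := by
    rw [hZ₀, mem_image]
    rintro ⟨t, ht, heq⟩
    have := hginj t p heq
    subst this
    exact hpJ ht
  have hstepX₀ : IsStep X₀ x₀ y₀ :=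
    ⟨hx₀X₀, fun h => hy₀U₀ (hX₀U₀ h), fun z hz hne => by omega⟩
  have hstepU₀ : IsStep U₀ x₀ y₀ :=
    ⟨hX₀U₀ hx₀X₀, hy₀U₀, fun z hz hne => by omega⟩
  set X₀' := mv X₀ x₀ y₀ with hX₀'
  have hW : X₀' ∪ Z₀ = mv U₀ x₀ y₀ := by
    ext z
    simp only [hX₀', mv, mem_union, mem_insert, mem_erase]
    constructor
    · rintro ((rfl | ⟨hne, hz⟩) | hz)
      · exact Or.inl rfl
      · exact Or.inr ⟨hne, hX₀U₀ hz⟩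
      · refine Or.inr ⟨fun h => hx₀Z₀ (h ▸ hz), hZ₀U₀ hz⟩
    · rintro (rfl | ⟨hne, hz⟩)
      · exact Or.inl (Or.inl rfl)
      · rw [hU₀eq, mem_union] at hz
        rcases hz with hz | hz
        · exact Or.inl (Or.inr ⟨hne, hz⟩)
        · exact Or.inr hz
  have hposX₀' : pos (X₀' ∪ Z₀) X₀' = I := by
    have h1 : (X₀.erase x₀).image (rk (mv U₀ x₀ y₀)) = (X₀.erase x₀).image (rk U₀) := by
      apply image_congr
      intro z hz
      rw [mem_coe, mem_erase] at hz
      exact hstepU₀.rk_mv_ne (hX₀U₀ hz.2) hz.1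
    have hX₀'def : X₀' = insert y₀ (X₀.erase x₀) := rfl
    rw [hW, hX₀'def]
    show (insert y₀ (X₀.erase x₀)).image (rk (mv U₀ x₀ y₀)) = I
    rw [image_insert, hstepU₀.rk_mv_y, h1]
    rw [show (X₀.erase x₀).image (rk U₀) = pos U₀ (X₀.erase x₀) from rfl]
    rw [pos_erase_of_subset hX₀U₀ hx₀X₀, hposX₀]
    apply insert_erase
    rw [← hposX₀]
    exact mem_image_of_mem _ hx₀X₀
  have hposZ₀' : pos (X₀' ∪ Z₀) Z₀ = J := by
    have h1 : Z₀.image (rk (mv U₀ x₀ y₀)) = Z₀.image (rk U₀) := by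
      apply image_congr
      intro z hz
      rw [mem_coe] at hz
      exact hstepU₀.rk_mv_ne (hZ₀U₀ hz) (fun h => hx₀Z₀ (h ▸ hz))
    rw [hW]
    show Z₀.image (rk (mv U₀ x₀ y₀)) = J
    rw [h1]
    rw [show Z₀.image (rk U₀) = pos U₀ Z₀ from rfl, hposZ₀]
  have hX₀'c : X₀'.card = k := by rw [hX₀', hstepX₀.card_mv, hX₀c]
  have hX₀'r : X₀' ⊆ range m₀ := by
    intro z hz
    rcases hstepX₀.mem_mv_iff.mp hz with rfl | hz
    · have hpu : p < u := by simpa using hIr hpI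
      have := hgbound p hpu
      simp only [mem_range, hy₀]
      omega
    · exact hX₀r hz.1
  have hEq₀' : χ' X₀' = χ' Z₀ := by
    have := L1 hom hX₀r hZ₀r hX₀'r hZ₀r hX₀c hZ₀c hX₀'c hZ₀c
      (by rw [← hU₀eq, hposX₀, hposX₀']) (by rw [← hU₀eq, hposZ₀, hposZ₀'])
    exact this.mp hEq₀
  -- contradiction via step_iff
  have hkX₀i : kth X₀ i = x₀ := by
    rw [hX₀, hx₀, hp]
    exact kth_image (hgS I) (by omega)
  have hrkX₀ : rk X₀ x₀ = i := by
    rw [← hkX₀i, rk_kth (by omega)]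
  have := step_iff (km_le hk hm) hom hX₀r hX₀c hstepX₀ (by
    have hpu : p < u := by simpa using hIr hpI
    have := hgbound p hpu
    simp only [hy₀, hg] at *
    omega)
  rw [hrkX₀] at this
  exact (this.mp (by rw [hEq₀, ← hEq₀', hX₀'])) hiS

end withChi

end CanonAux
end chunk4c
section chunk4d
open Finset
namespace CanonAux

section withChi

variable {k m₀ : ℕ} {χ' : Finset ℕ → ℕ}

lemma blocked_contra (hk : 1 ≤ k) (hm : (2*k+2)*(2*k+2) ≤ m₀) (hom : Homog k m₀ χ') :
    ∀ μ : ℕ, ∀ X Z : Finset ℕ, ∀ i : ℕ, X ⊆ range m₀ → Z ⊆ range m₀ →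
      X.card = k → Z.card = k → χ' X = χ' Z → i ∈ S0 k χ' →
      kth X i < kth Z i → kth X i ∈ Z → rk Z (kth X i) ≤ μ → False := by
  intro μ
  induction μ using Nat.strong_induction_on with
  | _ μ IH =>
  intro X Z i hX hZ hXc hZc hEq hiS hlt hin hμ
  classical
  have hik : i < k := by simpa using S0_subset hiS
  set c := 2*k+2 with hc
  have hcpos : 0 < c := by omega
  set U := X ∪ Z with hU
  have hXU : X ⊆ U := subset_union_left
  have hZU : Z ⊆ U := subset_union_right
  have huk : k ≤ U.card := hXc ▸ card_le_card hXU
  have hu2k : U.card ≤ 2*k := by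
    have h : U.card ≤ X.card + Z.card := card_union_le X Z
    omega
  set u := U.card with hu
  set I := pos U X with hI
  set J := pos U Z with hJ
  have hIr : I ⊆ range u := pos_subset hXU
  have hJr : J ⊆ range u := pos_subset hZU
  have hIc : I.card = k := by rw [hI, card_pos_eq hXU, hXc]
  have hJc : J.card = k := by rw [hJ, card_pos_eq hZU, hZc]
  have hIJ : I ∪ J = range u := by
    rw [hI, hJ, ← pos_union, ← hU, hu, pos_self]
  set g : ℕ → ℕ := fun t => c*(t+1) with hg
  have hgS : ∀ (V : Finset ℕ), SMonOn g V := fun V a _ b _ h => gmono hcpos h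
  have hginj : ∀ s t, g s = g t → s = t := fun s t h => ginj hcpos h
  set X₀ := I.image g with hX₀
  set Z₀ := J.image g with hZ₀
  set U₀ := (range u).image g with hU₀
  have hU₀eq : U₀ = X₀ ∪ Z₀ := by rw [hU₀, hX₀, hZ₀, ← image_union, hIJ]
  have hX₀U₀ : X₀ ⊆ U₀ := by rw [hU₀eq]; exact subset_union_left
  have hZ₀U₀ : Z₀ ⊆ U₀ := by rw [hU₀eq]; exact subset_union_right
  have hX₀c : X₀.card = k := by
    rw [hX₀, Finset.card_image_of_injOn (fun a _ b _ h => hginj a b h), hIc]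
  have hZ₀c : Z₀.card = k := by
    rw [hZ₀, Finset.card_image_of_injOn (fun a _ b _ h => hginj a b h), hJc]
  have hgbound : ∀ t, t < u → g t + 2 ≤ m₀ := by
    intro t ht
    have h1 : c*(t+1) ≤ c*(2*k) := Nat.mul_le_mul_left c (by omega)
    have h2 : c*c = c*(2*k) + 2*c := by rw [hc]; ring
    have h3 : 2 ≤ c := by omega
    simp only [hg]
    omega
  have hX₀r : X₀ ⊆ range m₀ := by
    intro z hz
    rw [hX₀, mem_image] at hz
    obtain ⟨t, ht, rfl⟩ := hz
    have : t < u := by simpa using hIr ht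
    have := hgbound t this
    simp only [mem_range]
    omega
  have hZ₀r : Z₀ ⊆ range m₀ := by
    intro z hz
    rw [hZ₀, mem_image] at hz
    obtain ⟨t, ht, rfl⟩ := hz
    have : t < u := by simpa using hJr ht
    have := hgbound t this
    simp only [mem_range]
    omega
  have hposX₀ : pos U₀ X₀ = I := by
    rw [hU₀, hX₀, pos_image (hgS (range u)) hIr, pos_range hIr]
  have hposZ₀ : pos U₀ Z₀ = J := by
    rw [hU₀, hZ₀, pos_image (hgS (range u)) hJr, pos_range hJr]
  have hEq₀ : χ' X₀ = χ' Z₀ := by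
    have := L1 hom hX hZ hX₀r hZ₀r hXc hZc hX₀c hZ₀c
      (by rw [← hU₀eq, hposX₀, hI]) (by rw [← hU₀eq, hposZ₀, hJ])
    exact this.mp hEq
  set p := kth I i with hp
  have hpI : p ∈ I := kth_mem (by omega)
  have hrkS : SMonOn (rk U) X := fun a ha b hb h => (lt_iff_rk_lt (hXU ha) b).mp h
  have hrkSZ : SMonOn (rk U) Z := fun a ha b hb h => (lt_iff_rk_lt (hZU ha) b).mp h
  have hpX : p = rk U (kth X i) := by
    rw [hp, hI]
    exact kth_image hrkS (by omega)
  have hkXiU : kth X i ∈ U := hXU (kth_mem (by omega))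
  have hpJ : p ∈ J := by
    rw [hpX, hJ]
    exact (mem_pos_iff hZU hkXiU).mpr hin
  -- the blocked slot data
  set s := rk Z (kth X i) with hs
  have hsk : s < k := by rw [hs, ← hZc]; exact rk_lt_card hin
  have hsi : s < i := by
    have h1 : rk Z (kth X i) < rk Z (kth Z i) := (lt_iff_rk_lt hin (kth Z i)).mp hlt
    have h2 : rk Z (kth Z i) = i := rk_kth (by omega)
    omega
  have hkZs : kth Z s = kth X i := kth_rk hin
  have hkJs : kth J s = p := by
    have h1 : kth J s = rk U (kth Z s) := by
      rw [hJ]; exact kth_image hrkSZ (by omega)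
    rw [h1, hkZs, ← hpX]
  -- interpolated chain step
  set φ : ℕ → ℕ := fun a => g (kth J (rk I a)) with hφ
  have hroom : ∀ a ∈ I, a ≤ φ a := by
    intro a ha
    have h1 : c*1 ≤ c*(kth J (rk I a)+1) := Nat.mul_le_mul_left c (by omega)
    have h2 : a < u := by simpa using hIr ha
    simp only [hφ, hg]
    omega
  have hgap : ∀ a ∈ I, ∀ b ∈ I, a < b → φ a + (b - a) ≤ φ b := by
    intro a ha b hb hab
    have hra : rk I a < rk I b := (lt_iff_rk_lt ha b).mp hab
    have hrb : rk I b < k := by rw [← hIc]; exact rk_lt_card hb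
    have h1 : kth J (rk I a) < kth J (rk I b) := kth_lt_kth hra (by omega)
    have h2 : c*(kth J (rk I a)+2) ≤ c*(kth J (rk I b)+1) := gle (by omega)
    have h3 : c*(kth J (rk I a)+2) = c*(kth J (rk I a)+1) + c := by ring
    have h4 : b < u := by simpa using hIr hb
    simp only [hφ, hg]
    omega
  obtain ⟨η, hηS, hηI, hηb⟩ := interp u I hIr φ hroom hgap
  have hηJ : SMonOn η J := fun a ha b hb h => hηS a (hJr ha) b (hJr hb) h
  have hsupφ : I.sup φ ≤ c*(2*k) := by
    apply Finset.sup_le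
    intro a ha
    have h1 : rk I a < k := by rw [← hIc]; exact rk_lt_card ha
    have h2 : kth J (rk I a) ∈ J := kth_mem (by omega)
    have h3 : kth J (rk I a) < u := by simpa using hJr h2
    simp only [hφ, hg]
    exact Nat.mul_le_mul_left c (by omega)
  have hηbound : ∀ t, t < u → η t + 2 ≤ m₀ := by
    intro t ht
    have h1 := hηb t ht
    have h2 : c*c = c*(2*k) + 2*c := by rw [hc]; ring
    have h3 : 2 ≤ c := by omega
    omega
  set Z' := J.image η with hZ'
  set W₁ := (range u).image η with hW₁
  have hZ₀η : Z₀ = I.image η := by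
    ext z
    simp only [hZ₀, mem_image]
    constructor
    · rintro ⟨q, hq, rfl⟩
      have hq1 : rk J q < k := by rw [← hJc]; exact rk_lt_card hq
      refine ⟨kth I (rk J q), kth_mem (by omega), ?_⟩
      rw [hηI _ (kth_mem (by omega))]
      simp only [hφ]
      rw [rk_kth (by omega), kth_rk hq]
    · rintro ⟨a, ha, rfl⟩
      have h1 : rk I a < k := by rw [← hIc]; exact rk_lt_card ha
      refine ⟨kth J (rk I a), kth_mem (by omega), ?_⟩
      rw [hηI a ha]
  have hW₁eq : W₁ = Z₀ ∪ Z' := by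
    rw [hW₁, hZ₀η, hZ', ← image_union, hIJ]
  have hposZ₀W : pos W₁ Z₀ = I := by
    rw [hW₁, hZ₀η, pos_image hηS hIr, pos_range hIr]
  have hposZ'W : pos W₁ Z' = J := by
    rw [hW₁, hZ', pos_image hηS hJr, pos_range hJr]
  have hZ'c : Z'.card = k := by
    rw [hZ', Finset.card_image_of_injOn
      (fun a ha b hb h => hηS.injOn a (hJr ha) b (hJr hb) h), hJc]
  have hZ'r : Z' ⊆ range m₀ := by
    intro z hz
    rw [hZ', mem_image] at hz
    obtain ⟨t, ht, rfl⟩ := hz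
    have h1 : t < u := by simpa using hJr ht
    have := hηbound t h1
    simp only [mem_range]
    omega
  have hEqZ' : χ' Z₀ = χ' Z' := by
    have := L1 hom hX hZ hZ₀r hZ'r hXc hZc hZ₀c hZ'c
      (by rw [← hW₁eq, hposZ₀W, hI]) (by rw [← hW₁eq, hposZ'W, hJ])
    exact this.mp hEq
  have hEqXZ' : χ' X₀ = χ' Z' := hEq₀.trans hEqZ'
  have hkX₀i : kth X₀ i = g p := by
    rw [hX₀, hp]
    exact kth_image (hgS I) (by omega)
  have hsI : kth I s ∈ I := kth_mem (by omega)
  have hgpη : g p = η (kth I s) := by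
    rw [hηI _ hsI]
    simp only [hφ]
    rw [rk_kth (by omega), hkJs]
  by_cases hcs : kth I s ∈ J
  · -- still blocked, at a strictly smaller rank: recurse
    set s' := rk J (kth I s) with hs'
    have hkJs' : kth J s' = kth I s := kth_rk hcs
    have hIsp : kth I s < p := by
      rw [hp]
      exact kth_lt_kth hsi (by omega)
    have hs's : s' < s := by
      have h1 : rk J (kth I s) < rk J (kth J s) := by
        apply (lt_iff_rk_lt hcs (kth J s)).mp
        rw [hkJs]
        exact hIsp
      have h2 : rk J (kth J s) = s := rk_kth (by omega)
      omega
    have hkZ's' : kth Z' s' = g p := by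
      rw [hZ']
      rw [kth_image hηJ (by omega)]
      rw [hkJs', hgpη]
    have hin' : kth X₀ i ∈ Z' := by
      rw [hkX₀i, ← hkZ's']
      exact kth_mem (by rw [hZ'c]; omega)
    have hrk' : rk Z' (kth X₀ i) = s' := by
      rw [hkX₀i, ← hkZ's']
      exact rk_kth (by rw [hZ'c]; omega)
    have hlt' : kth X₀ i < kth Z' i := by
      rw [hkX₀i, ← hkZ's']
      exact kth_lt_kth (by omega) (by rw [hZ'c]; omega)
    exact IH s' (by omega) X₀ Z' i hX₀r hZ'r hX₀c hZ'c hEqXZ' hiS hlt' hin'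
      (by rw [hrk'])
  · -- free now
    have hnin' : kth X₀ i ∉ Z' := by
      rw [hkX₀i, hgpη, hZ', mem_image]
      rintro ⟨t, ht, heq⟩
      have h1 : t = kth I s := hηS.injOn t (hJr ht) (kth I s) (hIr hsI) heq
      rw [h1] at ht
      exact hcs ht
    exact free_contra hk hm hom hX₀r hZ'r hX₀c hZ'c hEqXZ' hiS hnin'

lemma hard_dir (hk : 1 ≤ k) (hm : (2*k+2)*(2*k+2) ≤ m₀) (hom : Homog k m₀ χ')
    {A B : Finset ℕ} (hA : A ⊆ range m₀) (hB : B ⊆ range m₀)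
    (hAc : A.card = k) (hBc : B.card = k) (hEq : χ' A = χ' B) :
    ∀ i ∈ S0 k χ', kth A i = kth B i := by
  intro i hiS
  by_contra hne
  rcases lt_or_gt_of_ne hne with hlt | hlt
  · by_cases hin : kth A i ∈ B
    · exact blocked_contra hk hm hom (rk B (kth A i)) A B i hA hB hAc hBc hEq hiS hlt hin le_rfl
    · exact free_contra hk hm hom hA hB hAc hBc hEq hiS hin
  · by_cases hin : kth B i ∈ A
    · exact blocked_contra hk hm hom (rk A (kth B i)) B A i hB hA hBc hAc hEq.symm hiS hlt hin le_rfl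
    · exact free_contra hk hm hom hB hA hBc hAc hEq.symm hiS hin

/-- The canonical lemma: pattern homogeneity gives a canonical set of positions. -/
theorem canonB (hk : 1 ≤ k) (hm : (2*k+2)*(2*k+2) ≤ m₀) (hom : Homog k m₀ χ') :
    ∃ S, S ⊆ range k ∧ ∀ A B : Finset ℕ, A ⊆ range m₀ → B ⊆ range m₀ →
      A.card = k → B.card = k → (χ' A = χ' B ↔ sub A (S) = sub B (S)) := by
  refine ⟨S0 k χ', S0_subset, ?_⟩
  intro A B hA hB hAc hBc
  have hSrA : S0 k χ' ⊆ range A.card := by rw [hAc]; exact S0_subset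
  have hSrB : S0 k χ' ⊆ range B.card := by rw [hBc]; exact S0_subset
  constructor
  · intro hEq
    have hpt := hard_dir hk hm hom hA hB hAc hBc hEq
    rw [sub_eq_image_kth hSrA, sub_eq_image_kth hSrB]
    exact image_congr (fun i hi => hpt i hi)
  · intro hsub
    apply sweep (km_le hk hm) hom _ A B hA hB hAc hBc rfl
    intro i hiS
    have hiK : i < k := by simpa using S0_subset hiS
    have hSmonoA : SMonOn (kth A) (S0 k χ') := by
      intro a ha b hb h
      apply kth_lt_kth h
      rw [hAc]
      simpa using S0_subset hb
    have hSmonoB : SMonOn (kth B) (S0 k χ') := by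
      intro a ha b hb h
      apply kth_lt_kth h
      rw [hBc]
      simpa using S0_subset hb
    have hj : rk (S0 k χ') i < (S0 k χ').card := rk_lt_card hiS
    have e1 : kth (sub A (S0 k χ')) (rk (S0 k χ') i) = kth A i := by
      rw [sub_eq_image_kth hSrA, kth_image hSmonoA hj, kth_rk hiS]
    have e2 : kth (sub B (S0 k χ')) (rk (S0 k χ') i) = kth B i := by
      rw [sub_eq_image_kth hSrB, kth_image hSmonoB hj, kth_rk hiS]
    rw [← e1, ← e2, hsub]

end withChi

end CanonAux
end chunk4d
section chunk5
open Finset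
namespace CanonAux

lemma image_eq_image_iff {f : ℕ → ℕ} {U A B : Finset ℕ} (hf : SMonOn f U)
    (hA : A ⊆ U) (hB : B ⊆ U) : A.image f = B.image f ↔ A = B := by
  constructor
  · intro h
    apply Finset.Subset.antisymm
    · intro x hx
      have : f x ∈ B.image f := by rw [← h]; exact mem_image_of_mem f hx
      rw [mem_image] at this
      obtain ⟨b, hb, hfb⟩ := this
      rwa [hf.injOn b (hB hb) x (hA hx) hfb] at hb
    · intro x hx
      have : f x ∈ A.image f := by rw [h]; exact mem_image_of_mem f hx
      rw [mem_image] at this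
      obtain ⟨a, ha, hfa⟩ := this
      rwa [hf.injOn a (hA ha) x (hB hx) hfa] at ha
  · intro h; rw [h]

/-- Finite canonical Ramsey theorem (Erdős–Rado), with the canonical structure
expressed via position selections. -/
theorem canonicalRamsey (k m' : ℕ) (hk : 1 ≤ k) :
    ∃ R : ℕ, ∀ (X : Finset ℕ) (χ : Finset ℕ → ℕ), R ≤ X.card →
      ∃ M, M ⊆ X ∧ M.card = m' ∧ ∃ S, S ⊆ range k ∧
        ∀ A B, A ⊆ M → B ⊆ M → A.card = k → B.card = k →
          (χ A = χ B ↔ sub A S = sub B S) := by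
  classical
  set m₀ := max m' ((2*k+2)*(2*k+2)) with hm₀
  set mm := m₀ + 2*k with hmm
  set D := ((range (2*k)).powerset ×ˢ (range (2*k)).powerset) with hD
  obtain ⟨R, hR⟩ := ramsey (2*k) {x // x ∈ D.powerset} mm
  refine ⟨R, fun X χ hX => ?_⟩
  set Φ : Finset ℕ → {x // x ∈ D.powerset} := fun T =>
    ⟨D.filter (fun pq => χ (sub T pq.1) = χ (sub T pq.2)),
      mem_powerset.mpr (filter_subset _ _)⟩ with hΦ
  obtain ⟨M1, hM1X, hM1card, hM1hom⟩ := hR X Φ hX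
  set MM := sub M1 (range mm) with hMM
  have hMMsub : MM ⊆ M1 := sub_subset _ _
  have hMMcard : MM.card = mm := by
    rw [hMM, card_sub (by intro z hz; simp only [mem_range] at hz ⊢; omega), card_range]
  set ι : ℕ → ℕ := fun t => kth MM t with hι
  have hιS : SMonOn ι (range mm) := by
    intro a ha b hb h
    simp only [mem_range] at ha hb
    exact kth_lt_kth h (by omega)
  have hιmem : ∀ t < mm, ι t ∈ MM := by
    intro t ht
    exact kth_mem (by omega)
  set χ' : Finset ℕ → ℕ := fun s => χ (s.image ι) with hχ'
  have hom : Homog k m₀ χ' := by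
    intro T T' hT hT' hTc hT'c P Q hP hQ hPc hQc
    have himg : ∀ (W : Finset ℕ), W ⊆ range (m₀ + 2*k) → W.card = 2*k →
        (W.image ι ⊆ M1 ∧ (W.image ι).card = 2*k ∧
          ∀ P' : Finset ℕ, sub (W.image ι) P' = (sub W P').image ι) := by
      intro W hW hWc
      have hWr : W ⊆ range mm := by rw [hmm]; exact hW
      have hmono : SMonOn ι W := fun a ha b hb h => hιS a (hWr ha) b (hWr hb) h
      refine ⟨?_, ?_, ?_⟩
      · intro z hz
        rw [mem_image] at hz
        obtain ⟨t, ht, rfl⟩ := hz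
        have : t < mm := by simpa using hWr ht
        exact hMMsub (hιmem t this)
      · rw [Finset.card_image_of_injOn (fun a ha b hb h => hmono.injOn a ha b hb h), hWc]
      · intro P'
        exact sub_image hmono
    obtain ⟨hT1, hT2, hT3⟩ := himg T hT hTc
    obtain ⟨hT'1, hT'2, hT'3⟩ := himg T' hT' hT'c
    have hhom := hM1hom (T.image ι) (T'.image ι) hT1 hT'1 hT2 hT'2
    have hPQD : (P, Q) ∈ D := by
      rw [hD, mem_product]
      exact ⟨mem_powerset.mpr hP, mem_powerset.mpr hQ⟩
    have hval : (Φ (T.image ι)).val = (Φ (T'.image ι)).val := by rw [hhom]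
    simp only [hΦ] at hval
    have h1 : ((P, Q) ∈ D.filter (fun pq => χ (sub (T.image ι) pq.1) = χ (sub (T.image ι) pq.2)))
        ↔ ((P, Q) ∈ D.filter (fun pq => χ (sub (T'.image ι) pq.1) = χ (sub (T'.image ι) pq.2))) := by
      rw [hval]
    simp only [mem_filter, hPQD, true_and] at h1
    simp only [hχ', ← hT3, ← hT'3]
    exact h1
  obtain ⟨S, hSr, hiff⟩ := canonB hk (by rw [hm₀]; exact le_max_right _ _) hom
  have hm'm₀ : m' ≤ m₀ := by rw [hm₀]; exact le_max_left _ _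
  set M := (range m').image ι with hM
  have hMsub : M ⊆ X := by
    intro z hz
    rw [hM, mem_image] at hz
    obtain ⟨t, ht, rfl⟩ := hz
    have : t < mm := by simp only [mem_range] at ht; omega
    exact hM1X (hMMsub (hιmem t this))
  have hrm' : (range m' : Finset ℕ) ⊆ range mm := by
    intro z hz; simp only [mem_range] at hz ⊢; omega
  have hMcard : M.card = m' := by
    rw [hM, Finset.card_image_of_injOn
      (fun a ha b hb h => hιS.injOn a (hrm' ha) b (hrm' hb) h), card_range]
  refine ⟨M, hMsub, hMcard, S, hSr, ?_⟩
  intro A B hA hB hAc hBc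
  rw [hM] at hA hB
  obtain ⟨A₁, hA₁r, rfl⟩ := Finset.subset_image_iff.mp hA
  obtain ⟨B₁, hB₁r, rfl⟩ := Finset.subset_image_iff.mp hB
  have hA₁mm : A₁ ⊆ range mm := hA₁r.trans hrm'
  have hB₁mm : B₁ ⊆ range mm := hB₁r.trans hrm'
  have hmonoA : SMonOn ι A₁ := fun a ha b hb h => hιS a (hA₁mm ha) b (hA₁mm hb) h
  have hmonoB : SMonOn ι B₁ := fun a ha b hb h => hιS a (hB₁mm ha) b (hB₁mm hb) h
  have hA₁c : A₁.card = k := by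
    rw [← hAc]
    exact (Finset.card_image_of_injOn (fun a ha b hb h => hmonoA.injOn a ha b hb h)).symm
  have hB₁c : B₁.card = k := by
    rw [← hBc]
    exact (Finset.card_image_of_injOn (fun a ha b hb h => hmonoB.injOn a ha b hb h)).symm
  have hA₁m₀ : A₁ ⊆ range m₀ := hA₁r.trans (by intro z hz; simp only [mem_range] at hz ⊢; omega)
  have hB₁m₀ : B₁ ⊆ range m₀ := hB₁r.trans (by intro z hz; simp only [mem_range] at hz ⊢; omega)
  have hiff1 := hiff A₁ B₁ hA₁m₀ hB₁m₀ hA₁c hB₁c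
  have e1 : χ (A₁.image ι) = χ' A₁ := rfl
  have e2 : χ (B₁.image ι) = χ' B₁ := rfl
  rw [e1, e2, hiff1, sub_image hmonoA, sub_image hmonoB]
  exact (image_eq_image_iff hιS ((sub_subset _ _).trans hA₁mm)
    ((sub_subset _ _).trans hB₁mm)).symm

end CanonAux
end chunk5
section chunk6
open Finset CanonAux

theorem canonical_supersaturation_hypergraph' {α : Type*} [Fintype α] [DecidableEq α]
    (k : ℕ) (hk : 2 ≤ k) (H : Finset (Finset α)) (hunif : ∀ e ∈ H, e.card = k) :
    ∃ c₀ > (0 : ℝ), ∃ N : ℕ, ∀ n ≥ N, ∀ σ : α → ℕ, Function.Injective σ →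
      ∀ χ : Finset (Fin n) → ℕ,
        c₀ * (n : ℝ) ^ (Fintype.card α) ≤
          ({f : α → Fin n | Function.Injective f ∧
            IsCanonicalPatternH k H σ (fun e => χ (e.image f))}.ncard : ℝ) := by
  classical
  set a := Fintype.card α with ha
  obtain ⟨R₁, hR₁⟩ := canonicalRamsey k a (by omega)
  set R₀ := max R₁ a with hR₀
  have haR₀ : a ≤ R₀ := le_max_right _ _
  set E : ℝ := (2:ℝ)^a * (a.factorial : ℝ) * (R₀.choose a : ℝ) with hE
  have hEpos : 0 < E := by
    apply mul_pos (mul_pos (by positivity) (by exact_mod_cast a.factorial_pos))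
    exact_mod_cast Nat.choose_pos haR₀
  refine ⟨E⁻¹, by positivity, max R₀ (2*a) + 1, ?_⟩
  intro n hn σ hσ χ
  have hnR₀ : R₀ ≤ n := by omega
  have hn2a : 2*a ≤ n := by omega
  have hn1 : 1 ≤ n := by omega
  -- colouring on finsets of naturals
  set χℕ : Finset ℕ → ℕ :=
    fun s => χ ((s.filter (· < n)).attachFin (fun m hm => (mem_filter.mp hm).2)) with hχℕ
  have hLval : ∀ t : Finset (Fin n), χℕ (t.image (fun x : Fin n => (x : ℕ))) = χ t := by
    intro t
    simp only [hχℕ]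
    congr 1
    ext x
    rw [Finset.mem_attachFin]
    simp only [mem_filter, mem_image]
    constructor
    · rintro ⟨⟨y, hy, hyx⟩, _⟩
      rwa [← Fin.val_injective hyx]
    · intro hx
      exact ⟨⟨x, hx, rfl⟩, x.isLt⟩
  -- key: every R₀-subset contains a good embedding
  have key : ∀ XF : Finset (Fin n), XF.card = R₀ →
      ∃ f : α → Fin n, (Function.Injective f ∧
        IsCanonicalPatternH k H σ (fun e => χ (e.image f))) ∧ ∀ v, f v ∈ XF := by
    intro XF hXF
    set X : Finset ℕ := XF.image (fun x : Fin n => (x : ℕ)) with hX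
    have hXcard : X.card = R₀ := by
      rw [hX, Finset.card_image_of_injective _ Fin.val_injective, hXF]
    obtain ⟨M, hMX, hMcard, S, hSr, hcan⟩ := hR₁ X χℕ (by omega)
    have hMn : ∀ z ∈ M, z < n := by
      intro z hz
      have := hMX hz
      rw [hX, mem_image] at this
      obtain ⟨x, _, rfl⟩ := this
      exact x.isLt
    -- σ-rank and the embedding
    set rσ : α → ℕ := fun v => ((univ : Finset α).filter (fun u => σ u < σ v)).card with hrσ
    have hrσlt : ∀ v, rσ v < a := by
      intro v
      rw [ha, ← Finset.card_univ]
      apply card_lt_card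
      refine ⟨filter_subset _ _, fun hsub => ?_⟩
      have := hsub (mem_univ v)
      simp at this
    have hrσmono : ∀ {u v}, σ u < σ v → rσ u < rσ v := by
      intro u v huv
      apply card_lt_card
      refine ⟨fun w hw => ?_, fun hsub => ?_⟩
      · simp only [mem_filter] at hw ⊢
        exact ⟨hw.1, hw.2.trans huv⟩
      · have := hsub (by simp only [mem_filter]; exact ⟨mem_univ u, huv⟩)
        simp only [mem_filter] at this
        omega
    set fℕ : α → ℕ := fun v => kth M (rσ v) with hfℕ
    have hfmem : ∀ v, fℕ v ∈ M := fun v => kth_mem (by rw [hMcard]; exact hrσlt v)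
    have hfmono : ∀ {u v}, σ u < σ v → fℕ u < fℕ v := by
      intro u v huv
      exact kth_lt_kth (hrσmono huv) (by rw [hMcard]; exact hrσlt v)
    have hfℕinj : Function.Injective fℕ := by
      intro u v huv
      by_contra hne
      rcases lt_trichotomy (σ u) (σ v) with h | h | h
      · exact absurd (hfmono h) (by omega)
      · exact hne (hσ h)
      · exact absurd (hfmono h) (by omega)
    set f : α → Fin n := fun v => ⟨fℕ v, hMn _ (hfmem v)⟩ with hf
    have hfinj : Function.Injective f := by
      intro u v huv
      apply hfℕinj
      exact congrArg Fin.val huv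
    have hfXF : ∀ v, f v ∈ XF := by
      intro v
      have h1 : fℕ v ∈ X := hMX (hfmem v)
      rw [hX, mem_image] at h1
      obtain ⟨x, hx, hxv⟩ := h1
      have : x = f v := Fin.val_injective (by rw [hxv])
      rwa [← this]
    -- image and projection bookkeeping
    have himgval : ∀ e : Finset α, (e.image f).image (fun x : Fin n => (x : ℕ)) = e.image fℕ := by
      intro e
      rw [Finset.image_image]
      rfl
    have hrank : ∀ (e : Finset α), ∀ v ∈ e,
        (e.filter (fun u => σ u ≤ σ v)).card = rk (e.image fℕ) (fℕ v) + 1 := by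
      intro e v hv
      have h1 : (e.image fℕ).filter (fun z => z < fℕ v)
          = (e.filter (fun u => σ u < σ v)).image fℕ := by
        ext z
        simp only [mem_filter, mem_image]
        constructor
        · rintro ⟨⟨u, hu, rfl⟩, hlt⟩
          refine ⟨u, ⟨hu, ?_⟩, rfl⟩
          by_contra hc
          push_neg at hc
          rcases eq_or_lt_of_le hc with heq | hlt2
          · have : v = u := hσ heq
            subst this
            exact lt_irrefl _ hlt
          · have := hfmono hlt2
            omega
        · rintro ⟨u, ⟨hu, hlt⟩, rfl⟩
          exact ⟨⟨u, hu, rfl⟩, hfmono hlt⟩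
      have h2 : e.filter (fun u => σ u ≤ σ v) = insert v (e.filter (fun u => σ u < σ v)) := by
        ext u
        simp only [mem_filter, mem_insert]
        constructor
        · rintro ⟨hu, hle⟩
          rcases eq_or_lt_of_le hle with heq | hlt
          · exact Or.inl (hσ heq)
          · exact Or.inr ⟨hu, hlt⟩
        · rintro (rfl | ⟨hu, hlt⟩)
          · exact ⟨hv, le_rfl⟩
          · exact ⟨hu, hlt.le⟩
      rw [h2, card_insert_of_notMem (by simp)]
      simp only [rk, h1]
      rw [Finset.card_image_of_injective _ hfℕinj]
    set S' : Finset ℕ := S.image (· + 1) with hS'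
    have hS'sub : S' ⊆ Finset.Icc 1 k := by
      intro z hz
      rw [hS', mem_image] at hz
      obtain ⟨s, hs, rfl⟩ := hz
      have : s < k := by simpa using hSr hs
      simp only [Finset.mem_Icc]
      omega
    have hS'card : S'.card = S.card := by
      rw [hS', Finset.card_image_of_injective _ (fun a b h => by omega)]
    have hproj : ∀ e : Finset α, (projAt σ S' e).image fℕ = CanonAux.sub (e.image fℕ) S := by
      intro e
      have hfilter : projAt σ S' e = e.filter (fun v => rk (e.image fℕ) (fℕ v) ∈ S) := by
        unfold projAt
        apply filter_congr
        intro v hv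
        rw [hrank e v hv]
        simp only [hS', mem_image]
        constructor
        · rintro ⟨s, hs, heq⟩
          have : s = rk (e.image fℕ) (fℕ v) := by omega
          rwa [← this]
        · intro h
          exact ⟨_, h, rfl⟩
      rw [hfilter]
      ext z
      simp only [mem_image, mem_filter, mem_sub_iff]
      constructor
      · rintro ⟨v, ⟨hv, hrk⟩, rfl⟩
        exact ⟨⟨v, hv, rfl⟩, hrk⟩
      · rintro ⟨⟨v, hv, rfl⟩, hrk⟩
        exact ⟨v, ⟨hv, hrk⟩, rfl⟩
    have hedge : ∀ e ∈ H, (e.image fℕ) ⊆ M ∧ (e.image fℕ).card = k := by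
      intro e he
      constructor
      · intro z hz
        rw [mem_image] at hz
        obtain ⟨v, _, rfl⟩ := hz
        exact hfmem v
      · rw [Finset.card_image_of_injective _ hfℕinj, hunif e he]
    -- the kernel equivalence
    have hker : ∀ e ∈ H, ∀ e' ∈ H,
        (χ (e.image f) = χ (e'.image f) ↔ projAt σ S' e = projAt σ S' e') := by
      intro e he e' he'
      have h1 : χ (e.image f) = χℕ (e.image fℕ) := by rw [← himgval e, hLval]
      have h2 : χ (e'.image f) = χℕ (e'.image fℕ) := by rw [← himgval e', hLval]
      rw [h1, h2, hcan _ _ (hedge e he).1 (hedge e' he').1 (hedge e he).2 (hedge e' he').2]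
      rw [← hproj, ← hproj]
      exact (Finset.image_injective hfℕinj).eq_iff
    -- build φ
    set Uv : Finset ℕ := H.image (fun e => χ (e.image f)) with hUv
    set φ : Finset α → ℕ := fun A =>
      if h : ∃ e, e ∈ H ∧ projAt σ S' e = A then χ (h.choose.image f)
      else Uv.sup id + 1 + (Fintype.equivFin (Finset α) A : ℕ) with hφ
    have hφinj : ∀ A A', φ A = φ A' → A = A' := by
      intro A A' heq
      simp only [hφ] at heq
      by_cases h1 : ∃ e, e ∈ H ∧ projAt σ S' e = A
      · by_cases h2 : ∃ e, e ∈ H ∧ projAt σ S' e = A'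
        · rw [dif_pos h1, dif_pos h2] at heq
          obtain ⟨he1, hp1⟩ := h1.choose_spec
          obtain ⟨he2, hp2⟩ := h2.choose_spec
          rw [← hp1, ← hp2]
          exact (hker _ he1 _ he2).mp heq
        · rw [dif_pos h1, dif_neg h2] at heq
          obtain ⟨he1, _⟩ := h1.choose_spec
          have : χ (h1.choose.image f) ≤ Uv.sup id := by
            apply le_sup (f := id)
            rw [hUv]
            exact mem_image_of_mem _ he1
          omega
      · by_cases h2 : ∃ e, e ∈ H ∧ projAt σ S' e = A'
        · rw [dif_neg h1, dif_pos h2] at heq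
          obtain ⟨he2, _⟩ := h2.choose_spec
          have : χ (h2.choose.image f) ≤ Uv.sup id := by
            apply le_sup (f := id)
            rw [hUv]
            exact mem_image_of_mem _ he2
          omega
        · rw [dif_neg h1, dif_neg h2] at heq
          have : (Fintype.equivFin (Finset α) A : ℕ) = (Fintype.equivFin (Finset α) A' : ℕ) := by
            omega
          have := Fin.val_injective this
          exact (Fintype.equivFin (Finset α)).injective this
    have hcolor : ∀ e ∈ H, χ (e.image f) = φ (projAt σ S' e) := by
      intro e he
      have h1 : ∃ e', e' ∈ H ∧ projAt σ S' e' = projAt σ S' e := ⟨e, he, rfl⟩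
      simp only [hφ]
      rw [dif_pos h1]
      obtain ⟨he', hp'⟩ := h1.choose_spec
      exact ((hker _ he' _ he).mpr hp').symm
    refine ⟨f, ⟨hfinj, S', hS'sub, φ, fun A _ A' _ h => hφinj A A' h, hcolor⟩, hfXF⟩
  -- counting
  set Good : Finset (α → Fin n) :=
    univ.filter (fun f => Function.Injective f ∧
      IsCanonicalPatternH k H σ (fun e => χ (e.image f))) with hGood
  have hsetGood : {f : α → Fin n | Function.Injective f ∧
      IsCanonicalPatternH k H σ (fun e => χ (e.image f))} = ↑Good := by
    ext g
    simp [hGood]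
  rw [hsetGood, Set.ncard_coe_finset]
  set 𝒳 : Finset (Finset (Fin n)) := powersetCard R₀ univ with h𝒳
  have hnonempty : Nonempty (α → Fin n) := ⟨fun _ => ⟨0, by omega⟩⟩
  set Φc : Finset (Fin n) → (α → Fin n) := fun XF =>
    if h : ∃ f : α → Fin n, (Function.Injective f ∧
        IsCanonicalPatternH k H σ (fun e => χ (e.image f))) ∧ ∀ v, f v ∈ XF
    then h.choose else Classical.arbitrary _ with hΦc
  have hΦgood : ∀ XF ∈ 𝒳, Φc XF ∈ Good ∧ ∀ v, Φc XF v ∈ XF := by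
    intro XF hXF
    rw [h𝒳, mem_powersetCard] at hXF
    have hex := key XF hXF.2
    simp only [hΦc]
    rw [dif_pos hex]
    obtain ⟨⟨hinj, hcanon⟩, hmem⟩ := hex.choose_spec
    exact ⟨by rw [hGood]; simp only [mem_filter]; exact ⟨mem_univ _, hinj, hcanon⟩, hmem⟩
  have hfiber : ∀ g ∈ 𝒳.image Φc,
      (𝒳.filter (fun XF => Φc XF = g)).card ≤ (n - a).choose (R₀ - a) := by
    intro g hg
    rw [mem_image] at hg
    obtain ⟨XF₀, hXF₀, hgdef⟩ := hg
    set imf : Finset (Fin n) := univ.image g with himf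
    have hginj : Function.Injective g := by
      have := (hΦgood XF₀ hXF₀).1
      rw [hGood, mem_filter] at this
      rw [← hgdef]
      exact this.2.1
    have himfcard : imf.card = a := by
      rw [himf, Finset.card_image_of_injective _ hginj, card_univ, ha]
    have hmapsto : ∀ XF ∈ 𝒳.filter (fun XF => Φc XF = g),
        XF \ imf ∈ powersetCard (R₀ - a) (univ \ imf) := by
      intro XF hXF
      rw [mem_filter] at hXF
      have h1 := hΦgood XF hXF.1
      have hXFcard : XF.card = R₀ := (mem_powersetCard.mp (by rw [← h𝒳]; exact hXF.1)).2
      have himsub : imf ⊆ XF := by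
        rw [himf]
        intro z hz
        rw [mem_image] at hz
        obtain ⟨v, _, rfl⟩ := hz
        rw [← hXF.2]
        exact h1.2 v
      rw [mem_powersetCard]
      constructor
      · intro z hz
        rw [mem_sdiff] at hz ⊢
        exact ⟨mem_univ _, hz.2⟩
      · rw [card_sdiff_of_subset himsub, himfcard, hXFcard]
    have hinjOn : ∀ XF ∈ 𝒳.filter (fun XF => Φc XF = g),
        ∀ XF' ∈ 𝒳.filter (fun XF => Φc XF = g), XF \ imf = XF' \ imf → XF = XF' := by
      intro XF hXF XF' hXF' heq
      rw [mem_filter] at hXF hXF'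
      have himsub : imf ⊆ XF := by
        rw [himf]
        intro z hz
        rw [mem_image] at hz
        obtain ⟨v, _, rfl⟩ := hz
        rw [← hXF.2]
        exact (hΦgood XF hXF.1).2 v
      have himsub' : imf ⊆ XF' := by
        rw [himf]
        intro z hz
        rw [mem_image] at hz
        obtain ⟨v, _, rfl⟩ := hz
        rw [← hXF'.2]
        exact (hΦgood XF' hXF'.1).2 v
      rw [← Finset.sdiff_union_of_subset himsub, ← Finset.sdiff_union_of_subset himsub', heq]
    calc (𝒳.filter (fun XF => Φc XF = g)).card
        ≤ (powersetCard (R₀ - a) (univ \ imf)).card :=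
          card_le_card_of_injOn _ hmapsto (fun x hx y hy h => hinjOn x hx y hy h)
      _ = (n - a).choose (R₀ - a) := by
          rw [card_powersetCard, card_sdiff_of_subset (subset_univ _), card_univ, himfcard,
            Fintype.card_fin]
  have h𝒳card : 𝒳.card = n.choose R₀ := by
    rw [h𝒳, card_powersetCard, card_univ, Fintype.card_fin]
  have himgsub : 𝒳.image Φc ⊆ Good := by
    intro g hg
    rw [mem_image] at hg
    obtain ⟨XF, hXF, rfl⟩ := hg
    exact (hΦgood XF hXF).1
  have hcount : n.choose R₀ ≤ (n - a).choose (R₀ - a) * Good.card := by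
    calc n.choose R₀ = 𝒳.card := h𝒳card.symm
      _ ≤ (n - a).choose (R₀ - a) * (𝒳.image Φc).card :=
          Finset.card_le_mul_card_image 𝒳 _ hfiber
      _ ≤ (n - a).choose (R₀ - a) * Good.card :=
          Nat.mul_le_mul_left _ (card_le_card himgsub)
  -- binomial identity and descending factorial bounds
  have hid : n.choose R₀ * R₀.choose a = n.choose a * ((n - a).choose (R₀ - a)) :=
    Nat.choose_mul haR₀
  set C' := (n - a).choose (R₀ - a) with hC'
  have hC'pos : 0 < C' := Nat.choose_pos (by omega)
  have h5 : n.choose a * C' ≤ Good.card * R₀.choose a * C' := by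
    rw [← hid]
    calc n.choose R₀ * R₀.choose a ≤ (C' * Good.card) * R₀.choose a :=
          Nat.mul_le_mul_right _ hcount
      _ = Good.card * R₀.choose a * C' := by ring
  have h6 : n.choose a ≤ Good.card * R₀.choose a := Nat.le_of_mul_le_mul_right h5 hC'pos
  have h7 : n ^ a ≤ 2 ^ a * (n + 1 - a) ^ a := by
    calc n ^ a ≤ (2 * (n + 1 - a)) ^ a := Nat.pow_le_pow_left (by omega) a
      _ = 2 ^ a * (n + 1 - a) ^ a := mul_pow 2 _ a
  have h8 : (n + 1 - a) ^ a ≤ n.descFactorial a := Nat.pow_sub_le_descFactorial n a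
  have h9 : n.descFactorial a = a.factorial * n.choose a :=
    Nat.descFactorial_eq_factorial_mul_choose n a
  have hfinal : n ^ a ≤ 2 ^ a * (a.factorial * (Good.card * R₀.choose a)) := by
    calc n ^ a ≤ 2 ^ a * (n + 1 - a) ^ a := h7
      _ ≤ 2 ^ a * (a.factorial * n.choose a) := by
          rw [← h9]; exact Nat.mul_le_mul_left _ h8
      _ ≤ 2 ^ a * (a.factorial * (Good.card * R₀.choose a)) := by
          exact Nat.mul_le_mul_left _ (Nat.mul_le_mul_left _ h6)
  -- conclude over ℝ
  rw [inv_mul_le_iff₀ hEpos]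
  have hcast : ((n : ℝ)) ^ a ≤ (2:ℝ) ^ a * ((a.factorial : ℝ) * ((Good.card : ℝ) * (R₀.choose a : ℝ))) := by
    exact_mod_cast hfinal
  calc (n : ℝ) ^ a ≤ (2:ℝ) ^ a * ((a.factorial : ℝ) * ((Good.card : ℝ) * (R₀.choose a : ℝ))) := hcast
    _ = E * Good.card := by rw [hE]; ring

end chunk6

/-- hypergraph canonical supersaturation, Section 5: for every
`k`-graph `H` there is `c₀ > 0` such that, for sufficiently large `n`, any colouring of
`K_n^{(k)}` contains at least `c₀ n^{v(H)}` canonical copies of `H` with respect to any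
given ordering `σ` of `V(H)`. -/
theorem canonical_supersaturation_hypergraph {α : Type*} [Fintype α] [DecidableEq α]
    (k : ℕ) (hk : 2 ≤ k) (H : Finset (Finset α)) (hunif : ∀ e ∈ H, e.card = k) :
    ∃ c₀ > (0 : ℝ), ∃ N : ℕ, ∀ n ≥ N, ∀ σ : α → ℕ, Function.Injective σ →
      ∀ χ : Finset (Fin n) → ℕ,
        c₀ * (n : ℝ) ^ (Fintype.card α) ≤
          ({f : α → Fin n | Function.Injective f ∧
            IsCanonicalPatternH k H σ (fun e => χ (e.image f))}.ncard : ℝ) := by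
  exact canonical_supersaturation_hypergraph' k hk H hunif
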